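/- arXiv:2511.03864 — 7 statements merged into one kernel-verified Lean document; each statement's English description precedes it below -/
import Mathlib

section
/- Let μ and t be positive integers, let G be a K_{t,t}-free graph, let (T, β) be a tree decomposition of G whose induced matching number is at most μ, and let S be a maximum independent set in G. Let M be a positive integer such that every bipartite graph containing a matching of size at least M contains either an induced K_{t,t} or an induced matching of size μ+1. Then for every node x of T, the independence number of the subgraph of G induced by β(x) \ S is strictly less than M. -/
/-- A set of vertices is independent: pairwise nonadjacent. -/
def IsIndep {V : Type*} (G : SimpleGraph V) (s : Set V) : Prop :=
  s.Pairwise fun u v => ¬ G.Adj u v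

/-- Independence number of the subgraph of `G` induced by `X`. -/
noncomputable def indepNumOn {V : Type*} (G : SimpleGraph V) (X : Set V) : ℕ :=
  sSup {k | ∃ s : Finset V, ↑s ⊆ X ∧ IsIndep G ↑s ∧ s.card = k}

/-- `M` is a matching in `G`: adjacent endpoints, pairwise vertex-disjoint edges. -/
def IsMatching' {V : Type*} (G : SimpleGraph V) (M : Finset (V × V)) : Prop :=
  (∀ e ∈ M, G.Adj e.1 e.2) ∧
  ∀ e ∈ M, ∀ f ∈ M, e ≠ f →
    e.1 ≠ f.1 ∧ e.1 ≠ f.2 ∧ e.2 ≠ f.1 ∧ e.2 ≠ f.2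

/-- `M` is an induced matching in `G`. -/
def IsInducedMatching {V : Type*} (G : SimpleGraph V) (M : Finset (V × V)) : Prop :=
  IsMatching' G M ∧
  ∀ e ∈ M, ∀ f ∈ M, e ≠ f →
    ¬ G.Adj e.1 f.1 ∧ ¬ G.Adj e.1 f.2 ∧ ¬ G.Adj e.2 f.1 ∧ ¬ G.Adj e.2 f.2

/-- `μ(G, X)`: maximum size of an induced matching in `G` every edge of which
has an endpoint in `X`. -/
noncomputable def indMatchNumOn {V : Type*} (G : SimpleGraph V) (X : Set V) : ℕ :=
  sSup {k | ∃ M : Finset (V × V), IsInducedMatching G M ∧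
    (∀ e ∈ M, e.1 ∈ X ∨ e.2 ∈ X) ∧ M.card = k}

/-- `(T, bag)` is a tree decomposition of `G`. -/
structure IsTreeDecomp {V : Type*} (G : SimpleGraph V) {ι : Type}
    (T : SimpleGraph ι) (bag : ι → Set V) : Prop where
  isTree : T.IsTree
  edge_mem : ∀ ⦃u v : V⦄, G.Adj u v → ∃ x, u ∈ bag x ∧ v ∈ bag x
  support_connected : ∀ v : V, (T.induce {x | v ∈ bag x}).Connected

/-- A (bundled) tree decomposition of `G`. -/
structure TreeDecomp {V : Type*} (G : SimpleGraph V) where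
  ι : Type
  tree : SimpleGraph ι
  bag : ι → Set V
  is_td : IsTreeDecomp G tree bag

/-- Independence number of a tree decomposition. -/
noncomputable def TreeDecomp.alpha {V : Type*} {G : SimpleGraph V} (D : TreeDecomp G) : ℕ :=
  sSup {k | ∃ x : D.ι, k = indepNumOn G (D.bag x)}

/-- Induced matching number of a tree decomposition. -/
noncomputable def TreeDecomp.mu {V : Type*} {G : SimpleGraph V} (D : TreeDecomp G) : ℕ :=
  sSup {k | ∃ x : D.ι, k = indMatchNumOn G (D.bag x)}

/-- Tree-independence number of `G`. -/
noncomputable def treeIndepNum {V : Type*} (G : SimpleGraph V) : ℕ :=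
  sInf {k | ∃ D : TreeDecomp G, D.alpha = k}

/-- Induced matching treewidth of `G`. -/
noncomputable def imTreewidth {V : Type*} (G : SimpleGraph V) : ℕ :=
  sInf {k | ∃ D : TreeDecomp G, D.mu = k}

/-- `G` has no induced subgraph isomorphic to `K_{t,t}`. -/
def KttFree {V : Type*} (G : SimpleGraph V) (t : ℕ) : Prop :=
  IsEmpty (completeBipartiteGraph (Fin t) (Fin t) ↪g G)

/-- `G` contains `K_{t,t}` as a (not necessarily induced) subgraph. -/
def HasKttSubgraph {V : Type*} (G : SimpleGraph V) (t : ℕ) : Prop :=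
  ∃ A B : Finset V, Disjoint A B ∧ A.card = t ∧ B.card = t ∧
    ∀ a ∈ A, ∀ b ∈ B, G.Adj a b

/-- `G` is bipartite: its vertex set is the union of two independent sets. -/
def IsBipartite {V : Type*} (G : SimpleGraph V) : Prop :=
  ∃ A B : Set V, A ∪ B = Set.univ ∧ IsIndep G A ∧ IsIndep G B

/-- `N(X)`: vertices outside `X` adjacent to at least one vertex of `X`. -/
def nbhd {V : Type*} (G : SimpleGraph V) (X : Set V) : Set V :=
  {v | v ∉ X ∧ ∃ u ∈ X, G.Adj u v}

/-- Claim 3.3: with `(T, bag)` a tree decomposition of the `K_{t,t}`-free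
graph `G` with induced matching number at most `μ`, `S` a maximum independent set, and `M`
as in the induced-matching extraction lemma, every bag satisfies `α(G[bag x \ S]) < M`. -/
theorem stmt8 (μ t : ℕ) (hμ : 0 < μ) (ht : 0 < t)
    (V : Type) [Fintype V] (G : SimpleGraph V) (hG : KttFree G t)
    {ι : Type} (T : SimpleGraph ι) (bag : ι → Set V)
    (hTD : IsTreeDecomp G T bag)
    (hmu : ∀ x : ι, indMatchNumOn G (bag x) ≤ μ)
    (S : Finset V) (hSind : IsIndep G ↑S)
    (hSmax : ∀ S' : Finset V, IsIndep G ↑S' → S'.card ≤ S.card)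
    (M : ℕ) (hM : 0 < M)
    (hMprop : ∀ (W : Type) [Fintype W] (H : SimpleGraph W), IsBipartite H →
      (∃ M₀ : Finset (W × W), IsMatching' H M₀ ∧ M ≤ M₀.card) →
      (¬ KttFree H t ∨
        ∃ M₁ : Finset (W × W), IsInducedMatching H M₁ ∧ M₁.card = μ + 1)) :
    ∀ x : ι, indepNumOn G (bag x \ ↑S) < M := by
  classical
  intro x
  by_contra hcon
  push_neg at hcon
  -- extract a large independent set A in bag x \ S
  have hKne : ({k | ∃ s : Finset V, ↑s ⊆ bag x \ ↑S ∧ IsIndep G ↑s ∧ s.card = k}).Nonempty :=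
    ⟨0, ∅, by simp, by simp [IsIndep], by simp⟩
  have hKbdd : BddAbove {k | ∃ s : Finset V, ↑s ⊆ bag x \ ↑S ∧ IsIndep G ↑s ∧ s.card = k} :=
    ⟨Fintype.card V, fun k hk => by obtain ⟨s, _, _, hc⟩ := hk; exact hc ▸ s.card_le_univ⟩
  obtain ⟨A, hAsub, hAind, hAcard⟩ := Nat.sSup_mem hKne hKbdd
  have hAM : M ≤ A.card := by
    rw [hAcard]; exact hcon
  have hAnS : ∀ a ∈ A, a ∉ S := by
    intro a ha
    have := hAsub ha
    exact fun hs => this.2 (by exact_mod_cast hs)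
  have hAbag : ∀ a ∈ A, a ∈ bag x := fun a ha => (hAsub ha).1
  -- Hall's condition for the bipartite graph between A and S
  let r : ↥A → Finset V := fun a => S.filter (fun w => G.Adj ↑a w)
  have hall : ∀ s : Finset ↥A, s.card ≤ (s.biUnion r).card := by
    intro s
    set A' := s.image (Subtype.val) with hA'
    have hA'card : A'.card = s.card :=
      Finset.card_image_of_injective _ Subtype.val_injective
    set N := s.biUnion r with hN
    have hNS : N ⊆ S := by
      intro w hw
      rw [hN, Finset.mem_biUnion] at hw
      obtain ⟨a, _, hw⟩ := hw
      exact (Finset.mem_filter.mp hw).1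
    have hA'A : A' ⊆ A := by
      intro a ha
      rw [hA', Finset.mem_image] at ha
      obtain ⟨b, _, rfl⟩ := ha
      exact b.2
    have hdisj : Disjoint (S \ N) A' := by
      rw [Finset.disjoint_left]
      intro a ha ha'
      exact hAnS a (hA'A ha') (Finset.mem_sdiff.mp ha).1
    have hind : IsIndep G ↑((S \ N) ∪ A') := by
      intro u hu v hv huv hadj
      simp only [Finset.coe_union, Set.mem_union, Finset.coe_sdiff, Set.mem_diff,
        Finset.mem_coe] at hu hv
      rcases hu with ⟨huS, huN⟩ | huA
      · rcases hv with ⟨hvS, _⟩ | hvA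
        · exact hSind (by exact_mod_cast huS) (by exact_mod_cast hvS) huv hadj
        · -- u ∈ S \ N, v ∈ A' : then u ∈ r v ⊆ N, contradiction
          rw [hA', Finset.mem_image] at hvA
          obtain ⟨b, hb, rfl⟩ := hvA
          apply huN
          rw [hN, Finset.mem_biUnion]
          exact ⟨b, hb, Finset.mem_filter.mpr ⟨huS, hadj.symm⟩⟩
      · rcases hv with ⟨hvS, hvN⟩ | hvA
        · rw [hA', Finset.mem_image] at huA
          obtain ⟨b, hb, rfl⟩ := huA
          apply hvN
          rw [hN, Finset.mem_biUnion]
          exact ⟨b, hb, Finset.mem_filter.mpr ⟨hvS, hadj⟩⟩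
        · exact hAind (by exact_mod_cast hA'A huA) (by exact_mod_cast hA'A hvA) huv hadj
    have hle := hSmax _ hind
    rw [Finset.card_union_of_disjoint hdisj, Finset.card_sdiff_of_subset hNS] at hle
    have hNcard : N.card ≤ S.card := Finset.card_le_card hNS
    omega
  obtain ⟨f, hfinj, hfr⟩ :=
    (Finset.all_card_le_biUnion_card_iff_exists_injective r).mp hall
  have hfS : ∀ a : ↥A, f a ∈ S := fun a => (Finset.mem_filter.mp (hfr a)).1
  have hfadj : ∀ a : ↥A, G.Adj ↑a (f a) := fun a => (Finset.mem_filter.mp (hfr a)).2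
  -- the bipartite graph on A ∪ S
  set Wset : Set V := ↑A ∪ ↑S with hWset
  set H : SimpleGraph ↥Wset := G.induce Wset with hH
  have hHadj : ∀ u v : ↥Wset, H.Adj u v ↔ G.Adj ↑u ↑v := fun u v => Iff.rfl
  have hbip : IsBipartite H := by
    refine ⟨{w : ↥Wset | (w : V) ∈ A}, {w : ↥Wset | (w : V) ∈ S}, ?_, ?_, ?_⟩
    · apply Set.eq_univ_iff_forall.mpr
      intro w
      rcases w.2 with h | h
      · exact Or.inl (by exact_mod_cast h)
      · exact Or.inr (by exact_mod_cast h)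
    · intro u hu v hv huv hadj
      exact hAind (by exact_mod_cast hu) (by exact_mod_cast hv)
        (fun h => huv (Subtype.ext h)) ((hHadj u v).mp hadj)
    · intro u hu v hv huv hadj
      exact hSind (by exact_mod_cast hu) (by exact_mod_cast hv)
        (fun h => huv (Subtype.ext h)) ((hHadj u v).mp hadj)
  -- the matching of size |A| ≥ M in H
  let g : ↥A → ↥Wset × ↥Wset := fun a =>
    (⟨↑a, Or.inl (by exact_mod_cast a.2)⟩, ⟨f a, Or.inr (by exact_mod_cast hfS a)⟩)
  have hginj : Function.Injective g := by
    intro a b h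
    have := congrArg (fun p => (p.1 : V)) h
    exact Subtype.ext this
  have hMatch : ∃ M₀ : Finset (↥Wset × ↥Wset), IsMatching' H M₀ ∧ M ≤ M₀.card := by
    refine ⟨Finset.univ.image g, ⟨?_, ?_⟩, ?_⟩
    · intro e he
      rw [Finset.mem_image] at he
      obtain ⟨a, _, rfl⟩ := he
      exact (hHadj _ _).mpr (hfadj a)
    · intro e he e' he' hne
      rw [Finset.mem_image] at he he'
      obtain ⟨a, _, rfl⟩ := he
      obtain ⟨b, _, rfl⟩ := he'
      have hab : a ≠ b := fun h => hne (by rw [h])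
      refine ⟨?_, ?_, ?_, ?_⟩
      · exact fun h => hab (Subtype.ext (congrArg (fun p : ↥Wset => (p : V)) h : (a : V) = b))
      · exact fun h => hAnS ↑a a.2 (by rw [show (a : V) = f b from congrArg Subtype.val h]; exact hfS b)
      · exact fun h => hAnS ↑b b.2 (by rw [← show (f a : V) = ↑b from congrArg Subtype.val h]; exact hfS a)
      · exact fun h => hab (hfinj (congrArg Subtype.val h))
    · rw [Finset.card_image_of_injective _ hginj]
      simpa using hAM
  rcases hMprop ↥Wset H hbip hMatch with hK | hIM
  · -- K_{t,t} in H lifts to an induced K_{t,t} in G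
    rw [KttFree, not_isEmpty_iff] at hK
    obtain ⟨e⟩ := hK
    exact hG.false ((SimpleGraph.Embedding.induce Wset).comp e)
  · -- an induced matching of size μ+1 in H lifts to G with endpoints in A ⊆ bag x
    obtain ⟨M₁, ⟨⟨hadj₁, hdisj₁⟩, hind₁⟩, hcard₁⟩ := hIM
    let p : ↥Wset × ↥Wset → V × V := fun e => ((e.1 : V), (e.2 : V))
    have hpinj : Function.Injective p := by
      intro e e' h
      exact Prod.ext (Subtype.ext (congrArg Prod.fst h)) (Subtype.ext (congrArg Prod.snd h))
    have hkey : (μ + 1) ∈ {k | ∃ M : Finset (V × V), IsInducedMatching G M ∧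
        (∀ e ∈ M, e.1 ∈ bag x ∨ e.2 ∈ bag x) ∧ M.card = k} := by
      refine ⟨M₁.image p, ⟨⟨?_, ?_⟩, ?_⟩, ?_, ?_⟩
      · intro e he
        rw [Finset.mem_image] at he
        obtain ⟨e', he', rfl⟩ := he
        exact (hHadj _ _).mp (hadj₁ e' he')
      · intro e he e' he' hne
        rw [Finset.mem_image] at he he'
        obtain ⟨a, ha, rfl⟩ := he
        obtain ⟨b, hb, rfl⟩ := he'
        have hab : a ≠ b := fun h => hne (by rw [h])
        obtain ⟨h1, h2, h3, h4⟩ := hdisj₁ a ha b hb hab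
        exact ⟨fun h => h1 (Subtype.ext h), fun h => h2 (Subtype.ext h),
          fun h => h3 (Subtype.ext h), fun h => h4 (Subtype.ext h)⟩
      · intro e he e' he' hne
        rw [Finset.mem_image] at he he'
        obtain ⟨a, ha, rfl⟩ := he
        obtain ⟨b, hb, rfl⟩ := he'
        have hab : a ≠ b := fun h => hne (by rw [h])
        obtain ⟨h1, h2, h3, h4⟩ := hind₁ a ha b hb hab
        exact ⟨fun h => h1 ((hHadj _ _).mpr h), fun h => h2 ((hHadj _ _).mpr h),
          fun h => h3 ((hHadj _ _).mpr h), fun h => h4 ((hHadj _ _).mpr h)⟩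
      · intro e he
        rw [Finset.mem_image] at he
        obtain ⟨a, ha, rfl⟩ := he
        have hadj : G.Adj ↑a.1 ↑a.2 := (hHadj _ _).mp (hadj₁ a ha)
        by_cases h1 : (a.1 : V) ∈ A
        · exact Or.inl (hAbag _ h1)
        · by_cases h2 : (a.2 : V) ∈ A
          · exact Or.inr (hAbag _ h2)
          · exfalso
            have hs1 : (a.1 : V) ∈ S := by
              rcases a.1.2 with h | h
              · exact absurd (by exact_mod_cast h) h1
              · exact_mod_cast h
            have hs2 : (a.2 : V) ∈ S := by
              rcases a.2.2 with h | h
              · exact absurd (by exact_mod_cast h) h2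
              · exact_mod_cast h
            exact hSind (by exact_mod_cast hs1) (by exact_mod_cast hs2) hadj.ne hadj
      · rw [Finset.card_image_of_injective _ hpinj, hcard₁]
    have hbdd : BddAbove {k | ∃ M : Finset (V × V), IsInducedMatching G M ∧
        (∀ e ∈ M, e.1 ∈ bag x ∨ e.2 ∈ bag x) ∧ M.card = k} :=
      ⟨Fintype.card (V × V), fun k hk => by
        obtain ⟨m, _, _, hc⟩ := hk; exact hc ▸ m.card_le_univ⟩
    have := le_csSup hbdd hkey
    have hle := hmu x
    rw [indMatchNumOn] at hle
    omega
end

section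
/- Let μ and t be positive integers, let G be a K_{t,t}-free graph, let (T, β) be a tree decomposition of G whose induced matching number is at most μ, and let S be a maximum independent set in G. Let M be a positive integer such that every bipartite graph containing a matching of size at least M contains either an induced K_{t,t} or an induced matching of size μ+1, and let C be a positive integer such that in every K_{t,t}-free graph, given any M independent sets each of size at least C, there exists an independent set intersecting each of them in at least M vertices. Call a vertex v of G light if the independence number of G[N(v)] is less than C, and let S_ℓ be the set of light vertices in S. Then for every node x of T, the independence number of the subgraph of G induced by N(β(x) ∩ S_ℓ) is strictly less than μ·C. -/
/-- Claim 3.4: with `G`, `(T, bag)`, `S`, `M`, `C` as described, and `S_ℓ`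
the set of light vertices of `S` (those `v` with `α(G[N(v)]) < C`), every bag satisfies
`α(G[N(bag x ∩ S_ℓ)]) < μ·C`. -/
theorem stmt9 (μ t : ℕ) (hμ : 0 < μ) (ht : 0 < t)
    (V : Type) [Fintype V] (G : SimpleGraph V) (hG : KttFree G t)
    {ι : Type} (T : SimpleGraph ι) (bag : ι → Set V)
    (hTD : IsTreeDecomp G T bag)
    (hmu : ∀ x : ι, indMatchNumOn G (bag x) ≤ μ)
    (S : Finset V) (hSind : IsIndep G ↑S)
    (hSmax : ∀ S' : Finset V, IsIndep G ↑S' → S'.card ≤ S.card)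
    (M : ℕ) (hM : 0 < M)
    (hMprop : ∀ (W : Type) [Fintype W] (H : SimpleGraph W), IsBipartite H →
      (∃ M₀ : Finset (W × W), IsMatching' H M₀ ∧ M ≤ M₀.card) →
      (¬ KttFree H t ∨
        ∃ M₁ : Finset (W × W), IsInducedMatching H M₁ ∧ M₁.card = μ + 1))
    (C : ℕ) (hC : 0 < C)
    (hCprop : ∀ (W : Type) [Fintype W] [DecidableEq W] (H : SimpleGraph W),
      KttFree H t → ∀ J : Fin M → Finset W,
        (∀ i, IsIndep H ↑(J i) ∧ C ≤ (J i).card) →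
        ∃ I : Finset W, IsIndep H ↑I ∧ ∀ i, M ≤ (I ∩ J i).card) :
    ∀ x : ι,
      indepNumOn G
        (nbhd G (bag x ∩ {v : V | v ∈ S ∧ indepNumOn G (G.neighborSet v) < C}))
      < μ * C := by
  classical
  intro x
  set B : Set V := bag x ∩ {v : V | v ∈ S ∧ indepNumOn G (G.neighborSet v) < C} with hBdef
  have hμC : 0 < μ * C := Nat.mul_pos hμ hC
  have key : ∀ I : Finset V, ↑I ⊆ nbhd G B → IsIndep G ↑I → I.card < μ * C := by
    intro I hIsub hIind
    by_contra hcard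
    push_neg at hcard
    have hInb : ∀ v ∈ I, v ∉ B ∧ ∃ u ∈ B, G.Adj u v :=
      fun v hv => hIsub (Finset.mem_coe.2 hv)
    set P : Finset V → Prop :=
      fun B2 => (↑B2 ⊆ B) ∧ ∀ v ∈ I, ∃ s ∈ B2, G.Adj s v with hPdef
    have hPF : P (Finset.univ.filter (fun s => s ∈ B)) := by
      constructor
      · intro s hs
        simpa using hs
      · intro v hv
        obtain ⟨-, u, hu, huv⟩ := hInb v hv
        exact ⟨u, by simpa using hu, huv⟩
    have hKne : Set.Nonempty {n | ∃ B2 : Finset V, P B2 ∧ B2.card = n} := ⟨_, _, hPF, rfl⟩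
    obtain ⟨B2, hPB2, hB2card⟩ := Nat.sInf_mem hKne
    have hmin : ∀ B3 : Finset V, P B3 → B2.card ≤ B3.card := by
      intro B3 hB3
      rw [hB2card]
      exact Nat.sInf_le ⟨B3, hB3, rfl⟩
    -- each covering vertex has fewer than C independent neighbors (lightness)
    have hcov : ∀ s ∈ B2, (I.filter (fun v => G.Adj s v)).card < C := by
      intro s hs
      have hsB : s ∈ B := hPB2.1 (Finset.mem_coe.2 hs)
      have hlight : indepNumOn G (G.neighborSet s) < C := hsB.2.2
      refine lt_of_le_of_lt ?_ hlight
      have hbdd : BddAbove {k | ∃ s' : Finset V, ↑s' ⊆ G.neighborSet s ∧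
          IsIndep G ↑s' ∧ s'.card = k} := by
        refine ⟨Fintype.card V, ?_⟩
        rintro k ⟨s', -, -, rfl⟩
        exact (Finset.card_le_univ s').trans_eq Finset.card_univ
      have hmem : (I.filter (fun v => G.Adj s v)).card ∈ {k | ∃ s' : Finset V,
          ↑s' ⊆ G.neighborSet s ∧ IsIndep G ↑s' ∧ s'.card = k} := by
        refine ⟨I.filter (fun v => G.Adj s v), ?_, ?_, rfl⟩
        · intro v hv
          exact (Finset.mem_filter.1 (Finset.mem_coe.1 hv)).2
        · exact hIind.mono (by
            intro v hv
            exact Finset.mem_coe.2 (Finset.mem_filter.1 (Finset.mem_coe.1 hv)).1)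
      exact le_csSup hbdd hmem
    -- the minimum cover has at least μ+1 vertices
    have hge : μ + 1 ≤ B2.card := by
      by_contra hlt
      push_neg at hlt
      have hsub : I ⊆ B2.biUnion (fun s => I.filter (fun v => G.Adj s v)) := by
        intro v hv
        obtain ⟨s, hs, hadj⟩ := hPB2.2 v hv
        exact Finset.mem_biUnion.2 ⟨s, hs, Finset.mem_filter.2 ⟨hv, hadj⟩⟩
      have h1 : I.card ≤ ∑ s ∈ B2, (I.filter (fun v => G.Adj s v)).card :=
        (Finset.card_le_card hsub).trans Finset.card_biUnion_le
      have h2 : ∑ s ∈ B2, (I.filter (fun v => G.Adj s v)).card ≤ B2.card * (C - 1) := by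
        have := Finset.sum_le_card_nsmul B2 (fun s => (I.filter (fun v => G.Adj s v)).card)
          (C - 1) (fun s hs => Nat.le_pred_of_lt (hcov s hs))
        simpa [smul_eq_mul] using this
      have h3 : B2.card * (C - 1) ≤ μ * (C - 1) := Nat.mul_le_mul_right _ (by omega)
      have h4 : μ * (C - 1) + μ = μ * C := by
        rw [← Nat.mul_succ]
        congr 1
        omega
      omega
    -- minimality gives private neighbors
    have hpriv : ∀ s ∈ B2, ∃ v, v ∈ I ∧ G.Adj s v ∧ ∀ s' ∈ B2, s' ≠ s → ¬ G.Adj s' v := by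
      intro s hs
      by_contra hcon
      push_neg at hcon
      have hPerase : P (B2.erase s) := by
        constructor
        · exact Set.Subset.trans (by exact_mod_cast Finset.erase_subset s B2) hPB2.1
        · intro v hv
          obtain ⟨s0, hs0, hadj0⟩ := hPB2.2 v hv
          by_cases h0 : s0 = s
          · subst h0
            obtain ⟨s', hs', hne', hadj'⟩ := hcon v hv hadj0
            exact ⟨s', Finset.mem_erase.2 ⟨hne', hs'⟩, hadj'⟩
          · exact ⟨s0, Finset.mem_erase.2 ⟨h0, hs0⟩, hadj0⟩
      have h5 := hmin _ hPerase
      have h6 : (B2.erase s).card = B2.card - 1 := Finset.card_erase_of_mem hs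
      have h7 : 0 < B2.card := Finset.card_pos.2 ⟨s, hs⟩
      omega
    choose! g hg1 hg2 hg3 using hpriv
    obtain ⟨B3, hB3sub, hB3card⟩ := Finset.exists_subset_card_eq (s := B2) (n := μ + 1) hge
    set M1 : Finset (V × V) := B3.image (fun s => (s, g s)) with hM1
    have hinj : Function.Injective (fun s : V => (s, g s)) := by
      intro a b h
      exact congrArg Prod.fst h
    have hM1card : M1.card = μ + 1 := by
      rw [hM1, Finset.card_image_of_injective _ hinj, hB3card]
    have hpair : ∀ e ∈ M1, ∀ f ∈ M1, e ≠ f →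
        (e.1 ≠ f.1 ∧ e.1 ≠ f.2 ∧ e.2 ≠ f.1 ∧ e.2 ≠ f.2) ∧
        (¬ G.Adj e.1 f.1 ∧ ¬ G.Adj e.1 f.2 ∧ ¬ G.Adj e.2 f.1 ∧ ¬ G.Adj e.2 f.2) := by
      intro e he f hf hef
      obtain ⟨s, hs, rfl⟩ := Finset.mem_image.1 he
      obtain ⟨s', hs', rfl⟩ := Finset.mem_image.1 hf
      have hs2 : s ∈ B2 := hB3sub hs
      have hs'2 : s' ∈ B2 := hB3sub hs'
      have hne : s ≠ s' := fun h => hef (by rw [h])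
      have hsB : s ∈ B := hPB2.1 (Finset.mem_coe.2 hs2)
      have hs'B : s' ∈ B := hPB2.1 (Finset.mem_coe.2 hs'2)
      have hgI : g s ∈ I := hg1 s hs2
      have hg'I : g s' ∈ I := hg1 s' hs'2
      have hgnB : g s ∉ B := (hInb _ hgI).1
      have hg'nB : g s' ∉ B := (hInb _ hg'I).1
      have hgg : g s ≠ g s' := by
        intro h
        have hadj := hg2 s' hs'2
        rw [← h] at hadj
        exact hg3 s hs2 s' hs'2 hne.symm hadj
      refine ⟨⟨hne, ?_, ?_, hgg⟩, ?_, ?_, ?_, ?_⟩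
      · exact fun h => hg'nB ((show s = g s' from h) ▸ hsB)
      · exact fun h => hgnB ((show s' = g s from h.symm) ▸ hs'B)
      · exact hSind (Finset.mem_coe.2 hsB.2.1) (Finset.mem_coe.2 hs'B.2.1) hne
      · exact hg3 s' hs'2 s hs2 hne
      · exact fun h => hg3 s hs2 s' hs'2 hne.symm h.symm
      · exact hIind (Finset.mem_coe.2 hgI) (Finset.mem_coe.2 hg'I) hgg
    have hIM : IsInducedMatching G M1 := by
      refine ⟨⟨?_, ?_⟩, ?_⟩
      · intro e he
        obtain ⟨s, hs, rfl⟩ := Finset.mem_image.1 he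
        exact hg2 s (hB3sub hs)
      · intro e he f hf hef
        exact (hpair e he f hf hef).1
      · intro e he f hf hef
        exact (hpair e he f hf hef).2
    have hend : ∀ e ∈ M1, e.1 ∈ bag x ∨ e.2 ∈ bag x := by
      intro e he
      obtain ⟨s, hs, rfl⟩ := Finset.mem_image.1 he
      exact Or.inl (hPB2.1 (Finset.mem_coe.2 (hB3sub hs))).1
    have hle : μ + 1 ≤ indMatchNumOn G (bag x) := by
      have hbdd : BddAbove {k | ∃ M0 : Finset (V × V), IsInducedMatching G M0 ∧
          (∀ e ∈ M0, e.1 ∈ bag x ∨ e.2 ∈ bag x) ∧ M0.card = k} := by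
        refine ⟨Fintype.card (V × V), ?_⟩
        rintro k ⟨M0, -, -, rfl⟩
        exact (Finset.card_le_univ M0).trans_eq Finset.card_univ
      exact le_csSup hbdd ⟨M1, hIM, hend, hM1card⟩
    have := hmu x
    omega
  have h0 : (0 : ℕ) ∈ {k | ∃ s : Finset V, ↑s ⊆ nbhd G B ∧ IsIndep G ↑s ∧ s.card = k} :=
    ⟨∅, by simp, by simp [IsIndep], rfl⟩
  have hsup : indepNumOn G (nbhd G B) ≤ μ * C - 1 := by
    apply csSup_le ⟨0, h0⟩
    rintro k ⟨s, h1, h2, rfl⟩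
    have := key s h1 h2
    omega
  omega
end

section
/- Let μ and t be positive integers, let G be a K_{t,t}-free graph, let (T, β) be a tree decomposition of G whose induced matching number is at most μ, and let S be a maximum independent set in G. Let M be a positive integer such that every bipartite graph containing a matching of size at least M contains either an induced K_{t,t} or an induced matching of size μ+1, and let C be a positive integer such that in every K_{t,t}-free graph, given any M independent sets each of size at least C, there exists an independent set intersecting each of them in at least M vertices. Call a vertex v of G heavy if the independence number of G[N(v)] is at least C, and let S_h be the set of heavy vertices in S. Then for every node x of T, |β(x) ∩ S_h| < M. -/
lemma select_aux {V : Type} [DecidableEq V] (M : ℕ) (A : Finset V) :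
    A.card ≤ M → ∀ N : V → Finset V, (∀ a ∈ A, M ≤ (N a).card) →
    ∃ f : V → V, Set.InjOn f ↑A ∧ ∀ a ∈ A, f a ∈ N a := by
  induction A using Finset.induction_on with
  | empty => exact fun _ N _ => ⟨id, by simp, by simp⟩
  | @insert a s ha ih =>
    intro hcard N hN
    have hs : s.card ≤ M :=
      le_trans (Finset.card_le_card (Finset.subset_insert a s)) hcard
    obtain ⟨f, hinj, hf⟩ := ih hs N (fun b hb => hN b (Finset.mem_insert_of_mem hb))
    have h2 : s.card < M := by
      rw [Finset.card_insert_of_notMem ha] at hcard; omega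
    have hlt : (s.image f).card < (N a).card :=
      lt_of_le_of_lt Finset.card_image_le (lt_of_lt_of_le h2 (hN a (Finset.mem_insert_self a s)))
    obtain ⟨b, hbN, hbim⟩ : ∃ b ∈ N a, b ∉ s.image f := by
      by_contra h
      push_neg at h
      exact absurd (Finset.card_le_card h) (not_le.2 hlt)
    refine ⟨Function.update f a b, ?_, ?_⟩
    · intro u hu v hv huv
      simp only [Finset.coe_insert, Set.mem_insert_iff, Finset.mem_coe] at hu hv
      rcases hu with rfl | hu <;> rcases hv with rfl | hv
      · rfl
      · exfalso
        rw [Function.update_self, Function.update_of_ne (by rintro rfl; exact ha hv)] at huv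
        exact hbim (huv ▸ Finset.mem_image_of_mem f hv)
      · exfalso
        rw [Function.update_self, Function.update_of_ne (by rintro rfl; exact ha hu)] at huv
        exact hbim (huv ▸ Finset.mem_image_of_mem f hu)
      · rw [Function.update_of_ne (by rintro rfl; exact ha hu),
          Function.update_of_ne (by rintro rfl; exact ha hv)] at huv
        exact hinj hu hv huv
    · intro c hc
      rcases Finset.mem_insert.1 hc with rfl | hc2
      · simpa using hbN
      · rw [Function.update_of_ne (by rintro rfl; exact ha hc2)]
        exact hf c hc2

/-- Claim 3.5: with `G`, `(T, bag)`, `S`, `M`, `C` as described, and `S_h`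
the set of heavy vertices of `S` (those `v` with `α(G[N(v)]) ≥ C`), every bag satisfies
`|bag x ∩ S_h| < M`. -/
theorem stmt10 (μ t : ℕ) (hμ : 0 < μ) (ht : 0 < t)
    (V : Type) [Fintype V] (G : SimpleGraph V) (hG : KttFree G t)
    {ι : Type} (T : SimpleGraph ι) (bag : ι → Set V)
    (hTD : IsTreeDecomp G T bag)
    (hmu : ∀ x : ι, indMatchNumOn G (bag x) ≤ μ)
    (S : Finset V) (hSind : IsIndep G ↑S)
    (hSmax : ∀ S' : Finset V, IsIndep G ↑S' → S'.card ≤ S.card)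
    (M : ℕ) (hM : 0 < M)
    (hMprop : ∀ (W : Type) [Fintype W] (H : SimpleGraph W), IsBipartite H →
      (∃ M₀ : Finset (W × W), IsMatching' H M₀ ∧ M ≤ M₀.card) →
      (¬ KttFree H t ∨
        ∃ M₁ : Finset (W × W), IsInducedMatching H M₁ ∧ M₁.card = μ + 1))
    (C : ℕ) (hC : 0 < C)
    (hCprop : ∀ (W : Type) [Fintype W] [DecidableEq W] (H : SimpleGraph W),
      KttFree H t → ∀ J : Fin M → Finset W,
        (∀ i, IsIndep H ↑(J i) ∧ C ≤ (J i).card) →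
        ∃ I : Finset W, IsIndep H ↑I ∧ ∀ i, M ≤ (I ∩ J i).card) :
    ∀ x : ι,
      (bag x ∩ {v : V | v ∈ S ∧ C ≤ indepNumOn G (G.neighborSet v)}).ncard < M := by
    classical
  intro x
  by_contra hcon
  push_neg at hcon
  rw [Set.ncard_eq_toFinset_card'] at hcon
  obtain ⟨A, hAsub, hAcard⟩ := Finset.exists_subset_card_eq hcon
  have hmem : ∀ a ∈ A, a ∈ bag x ∧ a ∈ S ∧ C ≤ indepNumOn G (G.neighborSet a) := by
    intro a ha
    have h := hAsub ha
    rw [Set.mem_toFinset] at h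
    exact ⟨h.1, h.2.1, h.2.2⟩
  have hJex : ∀ a : V, ∃ J : Finset V, a ∈ A →
      (↑J ⊆ G.neighborSet a ∧ IsIndep G ↑J ∧ C ≤ J.card) := by
    intro a
    by_cases ha : a ∈ A
    · have hCa := (hmem a ha).2.2
      have hbdd : BddAbove {k | ∃ s : Finset V, ↑s ⊆ G.neighborSet a ∧ IsIndep G ↑s ∧ s.card = k} := by
        refine ⟨Fintype.card V, ?_⟩
        rintro k ⟨s, -, -, rfl⟩
        exact Finset.card_le_univ s
      have hne : {k | ∃ s : Finset V, ↑s ⊆ G.neighborSet a ∧ IsIndep G ↑s ∧ s.card = k}.Nonempty :=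
        ⟨0, ∅, by simp [IsIndep]⟩
      obtain ⟨s, h1, h2, h3⟩ := Nat.sSup_mem hne hbdd
      exact ⟨s, fun _ => ⟨h1, h2, by rw [h3]; exact hCa⟩⟩
    · exact ⟨∅, fun h => absurd h ha⟩
  choose J hJ using hJex
  have eqv := A.equivFinOfCardEq hAcard
  obtain ⟨I, hIind, hI⟩ := hCprop V G hG (fun i => J ((eqv.symm i : A) : V))
    (fun i => ⟨(hJ _ (eqv.symm i).2).2.1, (hJ _ (eqv.symm i).2).2.2⟩)
  have hNI : ∀ a ∈ A, M ≤ (I ∩ J a).card := by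
    intro a ha
    have h := hI (eqv ⟨a, ha⟩)
    rwa [Equiv.symm_apply_apply] at h
  obtain ⟨f, hinj, hf⟩ := select_aux M A hAcard.le (fun a => I ∩ J a) hNI
  have hfI : ∀ a ∈ A, f a ∈ I := fun a ha => (Finset.mem_inter.1 (hf a ha)).1
  have hadjf : ∀ a ∈ A, G.Adj a (f a) := by
    intro a ha
    have h := (hJ a ha).1 (Finset.mem_coe.2 (Finset.mem_inter.1 (hf a ha)).2)
    rwa [SimpleGraph.mem_neighborSet] at h
  have hAI : ∀ a ∈ A, a ∉ I := by
    intro a ha haI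
    exact hIind (Finset.mem_coe.2 haI) (Finset.mem_coe.2 (hfI a ha))
      (hadjf a ha).ne (hadjf a ha)
  have hAS : ∀ a ∈ A, a ∈ S := fun a ha => (hmem a ha).2.1
  let H : SimpleGraph V :=
    { Adj := fun u v => G.Adj u v ∧ ((u ∈ A ∧ v ∈ I) ∨ (v ∈ A ∧ u ∈ I))
      symm := ⟨fun u v h => ⟨h.1.symm, h.2.symm⟩⟩
      loopless := ⟨fun v h => G.loopless.irrefl v h.1⟩ }
  have Hadj : ∀ u v : V, H.Adj u v ↔
      (G.Adj u v ∧ ((u ∈ A ∧ v ∈ I) ∨ (v ∈ A ∧ u ∈ I))) := fun u v => Iff.rfl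
  have key : ∀ u v : V, (u ∈ A ∨ u ∈ I) → (v ∈ A ∨ v ∈ I) → u ≠ v →
      ¬ H.Adj u v → ¬ G.Adj u v := by
    intro u v hu hv hne hH hGadj
    rcases hu with hu | hu <;> rcases hv with hv | hv
    · exact hSind (Finset.mem_coe.2 (hAS u hu)) (Finset.mem_coe.2 (hAS v hv)) hne hGadj
    · exact hH ((Hadj u v).2 ⟨hGadj, Or.inl ⟨hu, hv⟩⟩)
    · exact hH ((Hadj u v).2 ⟨hGadj, Or.inr ⟨hv, hu⟩⟩)
    · exact hIind (Finset.mem_coe.2 hu) (Finset.mem_coe.2 hv) hne hGadj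
  have hbip : IsBipartite H := by
    refine ⟨↑A, (↑A : Set V)ᶜ, Set.union_compl_self _, ?_, ?_⟩
    · intro u hu v hv _ hadj'
      rcases ((Hadj u v).1 hadj').2 with ⟨_, h2⟩ | ⟨_, h2⟩
      · exact hAI v (Finset.mem_coe.1 hv) h2
      · exact hAI u (Finset.mem_coe.1 hu) h2
    · intro u hu v hv _ hadj'
      rcases ((Hadj u v).1 hadj').2 with ⟨h1, _⟩ | ⟨h1, _⟩
      · exact hu (Finset.mem_coe.2 h1)
      · exact hv (Finset.mem_coe.2 h1)
  let M₀ : Finset (V × V) := A.image (fun a => (a, f a))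
  have hM₀mem : ∀ p ∈ M₀, ∃ a ∈ A, p = (a, f a) := by
    intro p hp
    obtain ⟨a, ha, rfl⟩ := Finset.mem_image.1 hp
    exact ⟨a, ha, rfl⟩
  have hM₀ : IsMatching' H M₀ := by
    constructor
    · intro p hp
      obtain ⟨a, ha, rfl⟩ := hM₀mem p hp
      exact (Hadj a (f a)).2 ⟨hadjf a ha, Or.inl ⟨ha, hfI a ha⟩⟩
    · intro p hp q hq hpq
      obtain ⟨a, ha, rfl⟩ := hM₀mem p hp
      obtain ⟨b, hb, rfl⟩ := hM₀mem q hq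
      have hab : a ≠ b := fun h => hpq (by rw [h])
      refine ⟨hab, ?_, ?_, ?_⟩
      · intro h
        exact hAI a ha (by rw [show a = f b from h]; exact hfI b hb)
      · intro h
        exact hAI b hb (by rw [← show f a = b from h]; exact hfI a ha)
      · intro h
        exact hab (hinj (Finset.mem_coe.2 ha) (Finset.mem_coe.2 hb) h)
  have hM₀card : M₀.card = M := by
    rw [Finset.card_image_of_injOn (fun a _ b _ h => (Prod.ext_iff.1 h).1), hAcard]
  rcases hMprop V H hbip ⟨M₀, hM₀, hM₀card ▸ le_rfl⟩ with hKtt | ⟨M₁, hIndM, hM₁card⟩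
  · apply hKtt
    constructor
    intro g
    have hsupp : ∀ w : Fin t ⊕ Fin t, g w ∈ A ∨ g w ∈ I := by
      intro w
      cases w with
      | inl i =>
        have hadj' : H.Adj (g (Sum.inl i)) (g (Sum.inr ⟨0, ht⟩)) :=
          g.map_rel_iff.2 (by simp)
        rcases ((Hadj _ _).1 hadj').2 with ⟨h1, _⟩ | ⟨_, h2⟩
        · exact Or.inl h1
        · exact Or.inr h2
      | inr i =>
        have hadj' : H.Adj (g (Sum.inl ⟨0, ht⟩)) (g (Sum.inr i)) :=
          g.map_rel_iff.2 (by simp)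
        rcases ((Hadj _ _).1 hadj').2 with ⟨_, h2⟩ | ⟨h1, _⟩
        · exact Or.inr h2
        · exact Or.inl h1
    have hemb : completeBipartiteGraph (Fin t) (Fin t) ↪g G :=
      { toEmbedding := g.toEmbedding
        map_rel_iff' := by
          intro u v
          constructor
          · intro hGadj
            by_contra hcb
            have hne : u ≠ v := by
              rintro rfl
              exact G.loopless.irrefl _ hGadj
            have hHne : ¬ H.Adj (g u) (g v) := fun h => hcb (g.map_rel_iff.1 h)
            exact key (g u) (g v) (hsupp u) (hsupp v)
              (fun h => hne (g.injective h)) hHne hGadj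
          · intro hcb
            exact ((Hadj _ _).1 (g.map_rel_iff.2 hcb)).1 }
    exact hG.false hemb
  · have hsupp : ∀ p ∈ M₁, (p.1 ∈ A ∨ p.1 ∈ I) ∧ (p.2 ∈ A ∨ p.2 ∈ I) := by
      intro p hp
      rcases ((Hadj _ _).1 (hIndM.1.1 p hp)).2 with ⟨h1, h2⟩ | ⟨h1, h2⟩
      · exact ⟨Or.inl h1, Or.inr h2⟩
      · exact ⟨Or.inr h2, Or.inl h1⟩
    have hGInd : IsInducedMatching G M₁ := by
      refine ⟨⟨fun p hp => ((Hadj _ _).1 (hIndM.1.1 p hp)).1,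
        fun p hp q hq hpq => hIndM.1.2 p hp q hq hpq⟩, ?_⟩
      intro p hp q hq hpq
      obtain ⟨hne1, hne2, hne3, hne4⟩ := hIndM.1.2 p hp q hq hpq
      obtain ⟨hH1, hH2, hH3, hH4⟩ := hIndM.2 p hp q hq hpq
      obtain ⟨hp1, hp2⟩ := hsupp p hp
      obtain ⟨hq1, hq2⟩ := hsupp q hq
      exact ⟨key _ _ hp1 hq1 hne1 hH1, key _ _ hp1 hq2 hne2 hH2,
        key _ _ hp2 hq1 hne3 hH3, key _ _ hp2 hq2 hne4 hH4⟩
    have hend : ∀ p ∈ M₁, p.1 ∈ bag x ∨ p.2 ∈ bag x := by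
      intro p hp
      rcases ((Hadj _ _).1 (hIndM.1.1 p hp)).2 with ⟨h1, _⟩ | ⟨h1, _⟩
      · exact Or.inl (hmem _ h1).1
      · exact Or.inr (hmem _ h1).1
    have hle : μ + 1 ≤ indMatchNumOn G (bag x) := by
      apply le_csSup
      · refine ⟨Fintype.card (V × V), ?_⟩
        rintro k ⟨N, -, -, rfl⟩
        exact Finset.card_le_univ N
      · exact ⟨M₁, hGInd, hend, hM₁card⟩
    have hfin := hmu x
    omega
end

section
/- Let μ and t be positive integers, let G be a K_{t,t}-free graph, let (T, β) be a tree decomposition of G whose induced matching number is at most μ, and let S be a maximum independent set in G. Let M be a positive integer such that every bipartite graph containing a matching of size at least M contains either an induced K_{t,t} or an induced matching of size μ+1, and let C be a positive integer such that in every K_{t,t}-free graph, given any M independent sets each of size at least C, there exists an independent set intersecting each of them in at least M vertices. Call a vertex v light if the independence number of G[N(v)] is less than C, and let S_ℓ be the set of light vertices in S. Let (T', β') be obtained from (T, β) by adding, for every s ∈ S_ℓ, a new leaf node y_s adjacent to some node x_s with s ∈ β(x_s), setting β'(x) = (β(x) \ S_ℓ) ∪ N(β(x) ∩ S_ℓ)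 for nodes x of T and β'(y_s) = N[s]. Then the independence number of the tree decomposition (T', β') is strictly less than 2M + μ·C. -/
set_option linter.unusedSectionVars false
set_option maxHeartbeats 1000000

section helpers
variable {V : Type} [Fintype V] {G : SimpleGraph V}

lemma card_le_indepNumOn {X : Set V} {s : Finset V} (hs : ↑s ⊆ X) (hi : IsIndep G ↑s) :
    s.card ≤ indepNumOn G X := by
  apply le_csSup
  · exact ⟨Fintype.card V, fun k ⟨u, _, _, hc⟩ => hc ▸ Finset.card_le_univ u⟩
  · exact ⟨s, hs, hi, rfl⟩

lemma indepNumOn_lt {X : Set V} {n : ℕ} (hn : 0 < n)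
    (h : ∀ s : Finset V, ↑s ⊆ X → IsIndep G ↑s → s.card < n) : indepNumOn G X < n := by
  have h1 : indepNumOn G X ≤ n - 1 := by
    apply csSup_le
    · exact ⟨0, ∅, by simp, by simp [IsIndep], rfl⟩
    · rintro k ⟨s, h1, h2, rfl⟩
      have := h s h1 h2; omega
  omega

lemma exists_indep_of_le_indepNumOn {X : Set V} {c : ℕ} (hc : c ≤ indepNumOn G X) :
    ∃ s : Finset V, ↑s ⊆ X ∧ IsIndep G ↑s ∧ c ≤ s.card := by
  have hmem : indepNumOn G X ∈ {k | ∃ s : Finset V, ↑s ⊆ X ∧ IsIndep G ↑s ∧ s.card = k} := by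
    apply Nat.sSup_mem
    · exact ⟨0, ∅, by simp, by simp [IsIndep], rfl⟩
    · exact ⟨Fintype.card V, fun k ⟨u, _, _, hcc⟩ => hcc ▸ Finset.card_le_univ u⟩
  obtain ⟨s, h1, h2, h3⟩ := hmem
  exact ⟨s, h1, h2, h3 ▸ hc⟩

lemma card_le_indMatchNumOn {X : Set V} {m : Finset (V × V)} (hm : IsInducedMatching G m)
    (he : ∀ e ∈ m, e.1 ∈ X ∨ e.2 ∈ X) : m.card ≤ indMatchNumOn G X := by
  apply le_csSup
  · exact ⟨Fintype.card (V × V), fun k ⟨u, _, _, hc⟩ => hc ▸ Finset.card_le_univ u⟩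
  · exact ⟨m, hm, he, rfl⟩

lemma key_lemma (μ t M : ℕ) (G : SimpleGraph V) (hG : KttFree G t)
    (hMprop : ∀ (W : Type) [Fintype W] (H : SimpleGraph W), IsBipartite H →
      (∃ M₀ : Finset (W × W), IsMatching' H M₀ ∧ M ≤ M₀.card) →
      (¬ KttFree H t ∨
        ∃ M₁ : Finset (W × W), IsInducedMatching H M₁ ∧ M₁.card = μ + 1))
    (a b : Fin M → V) (ha : Function.Injective a) (hb : Function.Injective b)
    (hdisj : ∀ i j, a i ≠ b j)
    (hIa : ∀ i j, i ≠ j → ¬ G.Adj (a i) (a j))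
    (hIb : ∀ i j, i ≠ j → ¬ G.Adj (b i) (b j))
    (hadj : ∀ i, G.Adj (a i) (b i)) :
    ∃ M₁ : Finset (V × V), IsInducedMatching G M₁ ∧
      (∀ e ∈ M₁, (∃ i, e.1 = a i) ∨ (∃ i, e.2 = a i)) ∧ M₁.card = μ + 1 := by
  classical
  set W := Fin M ⊕ Fin M with hW
  let ψ : W → V := Sum.elim a b
  let H : SimpleGraph W :=
    { Adj := fun u w => match u, w with
        | Sum.inl i, Sum.inr j => G.Adj (a i) (b j)
        | Sum.inr j, Sum.inl i => G.Adj (a i) (b j)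
        | _, _ => False
      symm := ⟨by rintro (i | i) (j | j) h <;> first | exact h.elim | exact h⟩
      loopless := ⟨by rintro (i | i) h <;> exact h⟩ }
  have hψinj : Function.Injective ψ := by
    rintro (i | i) (j | j) h
    · exact congrArg Sum.inl (ha h)
    · exact absurd h (hdisj i j)
    · exact absurd h.symm (hdisj j i)
    · exact congrArg Sum.inr (hb h)
  have hψ : ∀ u w : W, H.Adj u w ↔ G.Adj (ψ u) (ψ w) := by
    rintro (i | i) (j | j)
    · constructor
      · exact fun h => h.elim
      · intro h
        by_cases hij : i = j
        · subst hij; exact (G.loopless.irrefl _ h).elim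
        · exact (hIa i j hij h).elim
    · exact Iff.rfl
    · exact G.adj_comm _ _
    · constructor
      · exact fun h => h.elim
      · intro h
        by_cases hij : i = j
        · subst hij; exact (G.loopless.irrefl _ h).elim
        · exact (hIb i j hij h).elim
  have hHfree : KttFree H t := by
    constructor
    intro e
    refine hG.false ⟨⟨ψ ∘ ⇑e, hψinj.comp e.injective⟩, ?_⟩
    intro u v
    simp only [Function.Embedding.coeFn_mk, Function.comp_apply]
    rw [← hψ]
    exact e.map_rel_iff
  have hbip : IsBipartite H := by
    refine ⟨Set.range Sum.inl, Set.range Sum.inr, ?_, ?_, ?_⟩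
    · ext (i | i) <;> simp
    · rintro u ⟨i, rfl⟩ v ⟨j, rfl⟩ _ h; exact h
    · rintro u ⟨i, rfl⟩ v ⟨j, rfl⟩ _ h; exact h
  have hmatch : ∃ M₀ : Finset (W × W), IsMatching' H M₀ ∧ M ≤ M₀.card := by
    refine ⟨Finset.univ.image (fun i : Fin M => ((Sum.inl i : W), (Sum.inr i : W))), ⟨?_, ?_⟩, ?_⟩
    · rintro e he
      obtain ⟨i, _, rfl⟩ := Finset.mem_image.mp he
      exact hadj i
    · rintro e he f hf hne
      obtain ⟨i, _, rfl⟩ := Finset.mem_image.mp he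
      obtain ⟨j, _, rfl⟩ := Finset.mem_image.mp hf
      have hij : i ≠ j := fun h => hne (by rw [h])
      exact ⟨fun h => hij (Sum.inl.inj h), fun h => Sum.inl_ne_inr h,
        fun h => Sum.inr_ne_inl h, fun h => hij (Sum.inr.inj h)⟩
    · rw [Finset.card_image_of_injective _ (fun i j h => by
        have h' : (Sum.inl i : W) = Sum.inl j := congrArg Prod.fst h
        exact Sum.inl.inj h')]
      simp
  rcases hMprop W H hbip hmatch with hbad | ⟨M₁, hM₁, hcard⟩
  · exact absurd hHfree hbad
  · let Φ : W × W → V × V := fun p => (ψ p.1, ψ p.2)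
    have hΦinj : Function.Injective Φ := by
      intro p q h
      have h1 := congrArg Prod.fst h
      have h2 := congrArg Prod.snd h
      exact Prod.ext (hψinj h1) (hψinj h2)
    refine ⟨M₁.image Φ, ⟨⟨?_, ?_⟩, ?_⟩, ?_, ?_⟩
    · rintro e he
      obtain ⟨p, hp, rfl⟩ := Finset.mem_image.mp he
      exact (hψ _ _).mp (hM₁.1.1 p hp)
    · rintro e he f hf hne
      obtain ⟨p, hp, rfl⟩ := Finset.mem_image.mp he
      obtain ⟨q, hq, rfl⟩ := Finset.mem_image.mp hf
      have hpq : p ≠ q := fun h => hne (by rw [h])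
      obtain ⟨d1, d2, d3, d4⟩ := hM₁.1.2 p hp q hq hpq
      exact ⟨fun h => d1 (hψinj h), fun h => d2 (hψinj h),
        fun h => d3 (hψinj h), fun h => d4 (hψinj h)⟩
    · rintro e he f hf hne
      obtain ⟨p, hp, rfl⟩ := Finset.mem_image.mp he
      obtain ⟨q, hq, rfl⟩ := Finset.mem_image.mp hf
      have hpq : p ≠ q := fun h => hne (by rw [h])
      obtain ⟨d1, d2, d3, d4⟩ := hM₁.2 p hp q hq hpq
      exact ⟨fun h => d1 ((hψ _ _).mpr h), fun h => d2 ((hψ _ _).mpr h),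
        fun h => d3 ((hψ _ _).mpr h), fun h => d4 ((hψ _ _).mpr h)⟩
    · rintro e he
      obtain ⟨p, hp, rfl⟩ := Finset.mem_image.mp he
      have hadjp := hM₁.1.1 p hp
      rcases hp1 : p.1 with i | i
      · refine Or.inl ⟨i, ?_⟩
        show ψ p.1 = a i
        rw [hp1]; rfl
      · rcases hp2 : p.2 with j | j
        · refine Or.inr ⟨j, ?_⟩
          show ψ p.2 = a j
          rw [hp2]; rfl
        · rw [hp1, hp2] at hadjp; exact hadjp.elim
    · rw [Finset.card_image_of_injective _ hΦinj]; exact hcard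

end helpers

/-- Claim 3.7: in the setting of Claims 3.3–3.6, the modified tree
decomposition `(T', β')` (leaves `y_s` for light vertices `s ∈ S_ℓ`, bags
`β'(x) = (bag x \ S_ℓ) ∪ N(bag x ∩ S_ℓ)` and `β'(y_s) = N[s]`) has independence number
strictly less than `2M + μ·C`. -/
theorem stmt12 (μ t : ℕ) (hμ : 0 < μ) (ht : 0 < t)
    (V : Type) [Fintype V] (G : SimpleGraph V) (hG : KttFree G t)
    {ι : Type} (T : SimpleGraph ι) (bag : ι → Set V)
    (hTD : IsTreeDecomp G T bag)
    (hmu : ∀ x : ι, indMatchNumOn G (bag x) ≤ μ)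
    (S : Finset V) (hSind : IsIndep G ↑S)
    (hSmax : ∀ S' : Finset V, IsIndep G ↑S' → S'.card ≤ S.card)
    (M : ℕ) (hM : 0 < M)
    (hMprop : ∀ (W : Type) [Fintype W] (H : SimpleGraph W), IsBipartite H →
      (∃ M₀ : Finset (W × W), IsMatching' H M₀ ∧ M ≤ M₀.card) →
      (¬ KttFree H t ∨
        ∃ M₁ : Finset (W × W), IsInducedMatching H M₁ ∧ M₁.card = μ + 1))
    (C : ℕ) (hC : 0 < C)
    (hCprop : ∀ (W : Type) [Fintype W] [DecidableEq W] (H : SimpleGraph W),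
      KttFree H t → ∀ J : Fin M → Finset W,
        (∀ i, IsIndep H ↑(J i) ∧ C ≤ (J i).card) →
        ∃ I : Finset W, IsIndep H ↑I ∧ ∀ i, M ≤ (I ∩ J i).card)
    (Sl : Set V)
    (hSldef : Sl = {v : V | v ∈ S ∧ indepNumOn G (G.neighborSet v) < C})
    (xs : Sl → ι) (hxs : ∀ s : Sl, (s : V) ∈ bag (xs s)) :
    ∀ y : ι ⊕ Sl,
      indepNumOn G
        ((Sum.elim (fun x : ι => (bag x \ Sl) ∪ nbhd G (bag x ∩ Sl))
          (fun s : Sl => insert (s : V) (G.neighborSet (s : V)))) y)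
      < 2 * M + μ * C := by

  classical
  have hSlS : ∀ v, v ∈ Sl → v ∈ S := by
    intro v hv; rw [hSldef] at hv; exact hv.1
  have hSllight : ∀ v, v ∈ Sl → indepNumOn G (G.neighborSet v) < C := by
    intro v hv; rw [hSldef] at hv; exact hv.2
  have hmulCle : μ * (C - 1) + μ * 1 ≤ μ * C := by
    rw [← Nat.mul_add]
    exact Nat.mul_le_mul_left _ (by omega)
  have hCmuC : C ≤ μ * C := Nat.le_mul_of_pos_left C hμ
  intro y
  apply indepNumOn_lt (by omega)
  intro I hIsub hIind
  cases y with
  | inr s =>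
    simp only [Sum.elim_inr] at hIsub
    by_cases hs : (s : V) ∈ I
    · have h1 : I.card ≤ 1 := by
        apply Finset.card_le_one.mpr
        intro u hu v hv
        have key : ∀ w ∈ I, w = (s : V) := by
          intro w hw
          by_contra hne
          have hwn : w ∈ G.neighborSet (s : V) := by
            rcases hIsub (Finset.mem_coe.mpr hw) with h | h
            · exact absurd h hne
            · exact h
          exact hIind (Finset.mem_coe.mpr hs) (Finset.mem_coe.mpr hw)
            (fun h => hne h.symm) hwn
        rw [key u hu, key v hv]
      omega
    · have hsub : ↑I ⊆ G.neighborSet (s : V) := by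
        intro v hv
        rcases hIsub hv with h | h
        · exact absurd (h ▸ hv) (by simpa [h] using hs)
        · exact h
      have h1 : I.card ≤ indepNumOn G (G.neighborSet (s : V)) :=
        card_le_indepNumOn hsub hIind
      have h2 := hSllight _ s.2
      omega
  | inl x =>
    simp only [Sum.elim_inl] at hIsub
    -- basic membership facts
    have hBagNotSl : ∀ v ∈ I, v ∈ bag x → v ∉ Sl := by
      intro v hv hvx hvSl
      rcases hIsub (Finset.mem_coe.mpr hv) with h | h
      · exact h.2 hvSl
      · exact h.1 ⟨hvx, hvSl⟩
    have hBn : ∀ b ∈ I, b ∉ bag x → ∃ s', s' ∈ bag x ∧ s' ∈ Sl ∧ G.Adj s' b := by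
      intro b hb hbnx
      rcases hIsub (Finset.mem_coe.mpr hb) with h | h
      · exact absurd h.1 hbnx
      · obtain ⟨u, hu, hadj⟩ := h.2
        exact ⟨u, hu.1, hu.2, hadj⟩
    have hBnotS : ∀ b ∈ I, b ∉ bag x → b ∉ S := by
      intro b hb hbnx hbS
      obtain ⟨s', _, hs'Sl, hadj⟩ := hBn b hb hbnx
      have hne : s' ≠ b := G.ne_of_adj hadj
      exact hSind (Finset.mem_coe.mpr (hSlS s' hs'Sl)) (Finset.mem_coe.mpr hbS) hne hadj
    set AS := (I.filter (fun v => v ∈ bag x)).filter (fun v => v ∈ S) with hASdef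
    set A0 := (I.filter (fun v => v ∈ bag x)).filter (fun v => v ∉ S) with hA0def
    set B := I.filter (fun v => ¬ v ∈ bag x) with hBdef
    have hsplit : AS.card + A0.card + B.card = I.card := by
      have h1 : (I.filter (fun v => v ∈ bag x)).card + B.card = I.card := by
        rw [hBdef]
        exact Finset.card_filter_add_card_filter_not (fun v => v ∈ bag x)
      have h2 : AS.card + A0.card = (I.filter (fun v => v ∈ bag x)).card := by
        rw [hASdef, hA0def]
        exact Finset.card_filter_add_card_filter_not (fun v => v ∈ S)
      omega
    -- ================== bound on AS ==================
    have hAS : AS.card < M := by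
      by_contra hge
      push_neg at hge
      obtain ⟨e, he⟩ := Function.Embedding.exists_of_card_le_finset
        (α := Fin M) (s := AS) (by simpa using hge)
      have heAS : ∀ i, e i ∈ AS := fun i => he ⟨i, rfl⟩
      have heI : ∀ i, e i ∈ I := fun i =>
        Finset.mem_filter.mp ((Finset.filter_subset _ _) (heAS i)) |>.1
      have heBag : ∀ i, e i ∈ bag x := fun i =>
        (Finset.mem_filter.mp ((Finset.filter_subset _ _) (heAS i))).2
      have heS : ∀ i, e i ∈ S := fun i => (Finset.mem_filter.mp (heAS i)).2
      have hheavy : ∀ i, C ≤ indepNumOn G (G.neighborSet (e i)) := by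
        intro i
        have hnotSl : e i ∉ Sl := hBagNotSl _ (heI i) (heBag i)
        rw [hSldef] at hnotSl
        simp only [Set.mem_setOf_eq, not_and, not_lt] at hnotSl
        exact hnotSl (heS i)
      choose J hJ1 hJ2 hJ3 using fun i => exists_indep_of_le_indepNumOn (hheavy i)
      obtain ⟨I', hI'ind, hI'card⟩ := hCprop V G hG J (fun i => ⟨hJ2 i, hJ3 i⟩)
      have hall : ∀ s : Finset (Fin M),
          s.card ≤ (s.biUnion (fun i => I' ∩ J i)).card := by
        intro s
        rcases s.eq_empty_or_nonempty with rfl | ⟨i0, hi0⟩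
        · simp
        · calc s.card ≤ M := by simpa using Finset.card_le_univ s
            _ ≤ (I' ∩ J i0).card := hI'card i0
            _ ≤ _ := Finset.card_le_card (Finset.subset_biUnion_of_mem (fun i => I' ∩ J i) hi0)
      obtain ⟨f0, hf0inj, hf0mem⟩ :=
        (Finset.all_card_le_biUnion_card_iff_exists_injective
          (fun i => I' ∩ J i)).mp hall
      have hf0I' : ∀ i, f0 i ∈ I' := fun i => (Finset.mem_inter.mp (hf0mem i)).1
      have hf0J : ∀ i, f0 i ∈ J i := fun i => (Finset.mem_inter.mp (hf0mem i)).2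
      have hadjf : ∀ i, G.Adj (e i) (f0 i) := fun i => hJ1 i (hf0J i)
      have hdisj : ∀ i j, e i ≠ f0 j := by
        intro i j heq
        have hadjj : G.Adj (e j) (e i) := heq ▸ hadjf j
        by_cases hij : e j = e i
        · rw [hij] at hadjj; exact G.loopless.irrefl _ hadjj
        · exact hSind (Finset.mem_coe.mpr (heS j)) (Finset.mem_coe.mpr (heS i)) hij hadjj
      obtain ⟨M₁, hM₁, hend, hM₁card⟩ := key_lemma μ t M G hG hMprop (fun i => e i) f0
        e.injective hf0inj hdisj
        (fun i j hij h => hSind (Finset.mem_coe.mpr (heS i)) (Finset.mem_coe.mpr (heS j))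
          (fun hh => hij (e.injective hh)) h)
        (fun i j hij h => hI'ind (Finset.mem_coe.mpr (hf0I' i)) (Finset.mem_coe.mpr (hf0I' j))
          (fun hh => hij (hf0inj hh)) h)
        hadjf
      have hle : M₁.card ≤ indMatchNumOn G (bag x) := by
        apply card_le_indMatchNumOn hM₁
        intro ed hed
        rcases hend ed hed with ⟨i, hi⟩ | ⟨i, hi⟩
        · exact Or.inl (hi ▸ heBag i)
        · exact Or.inr (hi ▸ heBag i)
      have := hmu x
      omega
    -- ================== bound on A0 ==================
    have hA0 : A0.card < M := by
      by_contra hge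
      push_neg at hge
      have hA0I : A0 ⊆ I := (Finset.filter_subset _ _).trans (Finset.filter_subset _ _)
      have hA0S : ∀ v ∈ A0, v ∉ S := fun v hv => (Finset.mem_filter.mp hv).2
      have hA0Bag : ∀ v ∈ A0, v ∈ bag x := fun v hv =>
        (Finset.mem_filter.mp ((Finset.filter_subset _ _) hv)).2
      have hswap : ∀ D : Finset V, D ⊆ A0 →
          D.card ≤ (S.filter (fun s' => ∃ d ∈ D, G.Adj d s')).card := by
        intro D hD
        set T := S.filter (fun s' => ∃ d ∈ D, G.Adj d s') with hT
        have hTS : T ⊆ S := Finset.filter_subset _ _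
        have hDS : ∀ v ∈ D, v ∉ S := fun v hv => hA0S v (hD hv)
        have hind : IsIndep G ↑((S \ T) ∪ D) := by
          intro u hu v hv hne
          simp only [Finset.coe_union, Set.mem_union, Finset.coe_sdiff, Set.mem_diff,
            Finset.mem_coe] at hu hv
          rcases hu with ⟨huS, huT⟩ | huD <;> rcases hv with ⟨hvS, hvT⟩ | hvD
          · exact hSind (Finset.mem_coe.mpr huS) (Finset.mem_coe.mpr hvS) hne
          · intro hadj
            exact huT (Finset.mem_filter.mpr ⟨huS, ⟨v, hvD, hadj.symm⟩⟩)
          · intro hadj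
            exact hvT (Finset.mem_filter.mpr ⟨hvS, ⟨u, huD, hadj⟩⟩)
          · exact hIind (Finset.mem_coe.mpr (hA0I (hD huD)))
              (Finset.mem_coe.mpr (hA0I (hD hvD))) hne
        have hcard := hSmax _ hind
        have hdisjDT : Disjoint (S \ T) D := by
          rw [Finset.disjoint_left]
          intro v hv hvD
          exact hDS v hvD (Finset.mem_sdiff.mp hv).1
        rw [Finset.card_union_of_disjoint hdisjDT, Finset.card_sdiff_of_subset hTS] at hcard
        have := Finset.card_le_card hTS
        omega
      have hall : ∀ s : Finset {v // v ∈ A0},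
          s.card ≤ (s.biUnion (fun a => S.filter (fun s' => G.Adj ↑a s'))).card := by
        intro s
        set D := s.image Subtype.val with hD
        have hDsub : D ⊆ A0 := by
          intro v hv
          obtain ⟨a, _, rfl⟩ := Finset.mem_image.mp hv
          exact a.2
        have hcardD : D.card = s.card :=
          Finset.card_image_of_injective s Subtype.val_injective
        have hTsub : S.filter (fun s' => ∃ d ∈ D, G.Adj d s') ⊆
            s.biUnion (fun a => S.filter (fun s' => G.Adj ↑a s')) := by
          intro v hv
          obtain ⟨hvS, d, hd, hadj⟩ := Finset.mem_filter.mp hv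
          obtain ⟨a, ha, rfl⟩ := Finset.mem_image.mp hd
          exact Finset.mem_biUnion.mpr ⟨a, ha, Finset.mem_filter.mpr ⟨hvS, hadj⟩⟩
        calc s.card = D.card := hcardD.symm
          _ ≤ _ := hswap D hDsub
          _ ≤ _ := Finset.card_le_card hTsub
      obtain ⟨f, hfinj, hfmem⟩ :=
        (Finset.all_card_le_biUnion_card_iff_exists_injective
          (fun a : {v // v ∈ A0} => S.filter (fun s' => G.Adj ↑a s'))).mp hall
      have hfS : ∀ a, f a ∈ S := fun a => (Finset.mem_filter.mp (hfmem a)).1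
      have hfadj : ∀ a : {v // v ∈ A0}, G.Adj ↑a (f a) :=
        fun a => (Finset.mem_filter.mp (hfmem a)).2
      obtain ⟨e⟩ : Nonempty (Fin M ↪ {v // v ∈ A0}) := by
        apply Function.Embedding.nonempty_of_card_le
        simpa [Fintype.card_coe] using hge
      obtain ⟨M₁, hM₁, hend, hM₁card⟩ := key_lemma μ t M G hG hMprop
        (fun i => ↑(e i)) (fun i => f (e i))
        (fun i j h => e.injective (Subtype.val_injective h))
        (fun i j h => e.injective (hfinj h))
        (by
          intro i j h
          have h' : ((e i : V)) = f (e j) := h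
          exact hA0S _ (e i).2 (h' ▸ hfS (e j)))
        (fun i j hij h => hIind (Finset.mem_coe.mpr (hA0I (e i).2))
          (Finset.mem_coe.mpr (hA0I (e j).2))
          (fun hh => hij (e.injective (Subtype.val_injective hh))) h)
        (fun i j hij h => hSind (Finset.mem_coe.mpr (hfS (e i))) (Finset.mem_coe.mpr (hfS (e j)))
          (fun hh => hij (e.injective (hfinj hh))) h)
        (fun i => hfadj (e i))
      have hle : M₁.card ≤ indMatchNumOn G (bag x) := by
        apply card_le_indMatchNumOn hM₁
        intro ed hed
        rcases hend ed hed with ⟨i, hi⟩ | ⟨i, hi⟩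
        · exact Or.inl (hi ▸ hA0Bag _ (e i).2)
        · exact Or.inr (hi ▸ hA0Bag _ (e i).2)
      have := hmu x
      omega
    -- ================== bound on B ==================
    have hBI : B ⊆ I := Finset.filter_subset _ _
    have hBx : ∀ b ∈ B, b ∉ bag x := fun b hb => (Finset.mem_filter.mp hb).2
    have hB : B.card ≤ μ * (C - 1) := by
      set P : Finset V → Prop :=
        fun R => (∀ v ∈ R, v ∈ bag x ∧ v ∈ Sl) ∧ ∀ b ∈ B, ∃ s' ∈ R, G.Adj s' b
        with hP
      have hPex : ∃ R, P R := by
        refine ⟨Finset.univ.filter (fun v => v ∈ bag x ∧ v ∈ Sl), ?_, ?_⟩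
        · intro v hv
          exact (Finset.mem_filter.mp hv).2
        · intro b hb
          obtain ⟨s', h1, h2, h3⟩ := hBn b (hBI hb) (hBx b hb)
          exact ⟨s', Finset.mem_filter.mpr ⟨Finset.mem_univ _, h1, h2⟩, h3⟩
      have hne : {k | ∃ R, P R ∧ R.card = k}.Nonempty :=
        ⟨hPex.choose.card, hPex.choose, hPex.choose_spec, rfl⟩
      obtain ⟨R, hR, hRcard⟩ := Nat.sInf_mem hne
      have hpriv : ∀ s' ∈ R, ∃ b ∈ B, G.Adj s' b ∧
          ∀ s'' ∈ R, s'' ≠ s' → ¬ G.Adj s'' b := by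
        intro s' hs'
        by_contra hcon
        push_neg at hcon
        have hcover : P (R.erase s') := by
          constructor
          · intro v hv
            exact hR.1 v (Finset.erase_subset _ _ hv)
          · intro b hb
            obtain ⟨s₁, h1, h2⟩ := hR.2 b hb
            by_cases h : s₁ = s'
            · subst h
              obtain ⟨s'', hs''R, hne'', hadj''⟩ := hcon b hb h2
              exact ⟨s'', Finset.mem_erase.mpr ⟨hne'', hs''R⟩, hadj''⟩
            · exact ⟨s₁, Finset.mem_erase.mpr ⟨h, h1⟩, h2⟩
        have hle : sInf {k | ∃ R, P R ∧ R.card = k} ≤ (R.erase s').card :=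
          Nat.sInf_le ⟨_, hcover, rfl⟩
        rw [Finset.card_erase_of_mem hs'] at hle
        have hpos : 0 < R.card := Finset.card_pos.mpr ⟨s', hs'⟩
        omega
      choose! p hp1 hp2 hp3 using hpriv
      have hpB : ∀ s' ∈ R, p s' ∈ B := hp1
      have hRS : ∀ s' ∈ R, s' ∈ S := fun s' hs' => hSlS _ (hR.1 s' hs').2
      have hpne : ∀ s₁ ∈ R, ∀ s₂ ∈ R, s₁ ≠ s₂ → p s₁ ≠ p s₂ := by
        intro s₁ h1 s₂ h2 hne12 heq
        have := hp3 s₂ h2 s₁ h1 hne12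
        rw [← heq] at this
        exact this (hp2 s₁ h1)
      have hM₂ : IsInducedMatching G (R.image (fun s' => (s', p s'))) := by
        have memim : ∀ ed ∈ R.image (fun s' => (s', p s')),
            ∃ s' ∈ R, ed = (s', p s') := by
          intro ed hed
          obtain ⟨s', hs', rfl⟩ := Finset.mem_image.mp hed
          exact ⟨s', hs', rfl⟩
        refine ⟨⟨?_, ?_⟩, ?_⟩
        · intro ed hed
          obtain ⟨s', hs', rfl⟩ := memim ed hed
          exact hp2 s' hs'
        · intro ed hed fd hfd hne'
          obtain ⟨s₁, h1, rfl⟩ := memim ed hed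
          obtain ⟨s₂, h2, rfl⟩ := memim fd hfd
          have hne12 : s₁ ≠ s₂ := fun h => hne' (by rw [h])
          refine ⟨hne12, ?_, ?_, hpne s₁ h1 s₂ h2 hne12⟩
          · intro h
            have h' : s₁ = p s₂ := h
            exact hBnotS _ (hBI (hpB s₂ h2)) (hBx _ (hpB s₂ h2)) (h' ▸ hRS s₁ h1)
          · intro h
            have h' : p s₁ = s₂ := h
            exact hBnotS _ (hBI (hpB s₁ h1)) (hBx _ (hpB s₁ h1)) (h'.symm ▸ hRS s₂ h2)
        · intro ed hed fd hfd hne'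
          obtain ⟨s₁, h1, rfl⟩ := memim ed hed
          obtain ⟨s₂, h2, rfl⟩ := memim fd hfd
          have hne12 : s₁ ≠ s₂ := fun h => hne' (by rw [h])
          refine ⟨?_, ?_, ?_, ?_⟩
          · exact hSind (Finset.mem_coe.mpr (hRS s₁ h1)) (Finset.mem_coe.mpr (hRS s₂ h2)) hne12
          · exact hp3 s₂ h2 s₁ h1 hne12
          · intro h
            exact hp3 s₁ h1 s₂ h2 (fun hh => hne12 hh.symm) h.symm
          · exact hIind (Finset.mem_coe.mpr (hBI (hpB s₁ h1)))
              (Finset.mem_coe.mpr (hBI (hpB s₂ h2))) (hpne s₁ h1 s₂ h2 hne12)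
      have hRμ : R.card ≤ μ := by
        have hcardim : (R.image (fun s' => (s', p s'))).card = R.card := by
          apply Finset.card_image_of_injective
          intro u v h
          exact congrArg Prod.fst h
        have hle2 : (R.image (fun s' => (s', p s'))).card ≤ indMatchNumOn G (bag x) := by
          apply card_le_indMatchNumOn hM₂
          intro ed hed
          obtain ⟨s', hs', rfl⟩ := Finset.mem_image.mp hed
          exact Or.inl (hR.1 s' hs').1
        have := hmu x
        omega
      have hsub : B ⊆ R.biUnion (fun s' => B.filter (fun b => G.Adj s' b)) := by
        intro b hb
        obtain ⟨s', h1, h2⟩ := hR.2 b hb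
        exact Finset.mem_biUnion.mpr ⟨s', h1, Finset.mem_filter.mpr ⟨hb, h2⟩⟩
      have hper : ∀ s' ∈ R, (B.filter (fun b => G.Adj s' b)).card ≤ C - 1 := by
        intro s' hs'
        have hlight := hSllight _ (hR.1 s' hs').2
        have hsubN : ↑(B.filter (fun b => G.Adj s' b)) ⊆ G.neighborSet s' := by
          intro v hv
          simp only [Finset.coe_filter, Set.mem_setOf_eq] at hv
          exact hv.2
        have hindN : IsIndep G ↑(B.filter (fun b => G.Adj s' b)) := by
          intro u hu v hv hne
          simp only [Finset.coe_filter, Set.mem_setOf_eq] at hu hv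
          exact hIind (Finset.mem_coe.mpr (hBI hu.1)) (Finset.mem_coe.mpr (hBI hv.1)) hne
        have := card_le_indepNumOn hsubN hindN
        omega
      calc B.card ≤ (R.biUnion (fun s' => B.filter (fun b => G.Adj s' b))).card :=
            Finset.card_le_card hsub
        _ ≤ ∑ s' ∈ R, (B.filter (fun b => G.Adj s' b)).card := Finset.card_biUnion_le
        _ ≤ ∑ _s' ∈ R, (C - 1) := Finset.sum_le_sum hper
        _ = R.card * (C - 1) := by rw [Finset.sum_const, smul_eq_mul]
        _ ≤ μ * (C - 1) := Nat.mul_le_mul_right _ hRμ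
    omega
end

section
/- There exists an integer t_0 such that for every integer t ≥ t_0, setting n = ⌊2^{t/3}⌋, there exists a bipartite graph G with parts A and B of size n each satisfying simultaneously: (i) G contains no K_{t,t} as a subgraph; (ii) for all subsets X ⊆ A and Y ⊆ B with |X| = |Y| = t, there is at least one edge of G between X and Y; and (iii) G contains no induced matching of size t. -/
/-!
Encode a bipartite graph on `Fin n ⊕ Fin n` by its biadjacency matrix `M`. Each of the three
forbidden configurations (a `K_{t,t}`, an edgeless pair of `t`-sets, an induced matching of size
`t`) makes some `t × t` submatrix of `M` equal to a fixed pattern: all ones, all zeros, the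
identity. Fixing the rows and columns pins down `t²` entries, so at most
`n^t · n^t · 2^(n² - t²)` matrices contain a given pattern. Since `n³ ≤ 2^t`, we get
`3 n^(2t) < 2^(t²)`, so counting shows that some matrix avoids all three patterns.
-/

open Finset Fintype

variable {α β ι κ : Type*}

def HasSubmatrix (M : α × β → Bool) (P : ι × κ → Bool) : Prop :=
  ∃ (f : ι ↪ α) (g : κ ↪ β), ∀ p, M (f.prodMap g p) = P p

lemma hasSubmatrix_const_of_forall_mem {m n : ℕ} {M : α × β → Bool} {c : Bool}
    {X : Finset α} {Y : Finset β} (hX : #X = m) (hY : #Y = n)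
    (h : ∀ a ∈ X, ∀ b ∈ Y, M (a, b) = c) : HasSubmatrix M fun _ : Fin m × Fin n => c :=
  ⟨(X.equivFinOfCardEq hX).symm.toEmbedding.trans (.subtype _),
    (Y.equivFinOfCardEq hY).symm.toEmbedding.trans (.subtype _),
    fun _ => h _ (Subtype.prop _) _ (Subtype.prop _)⟩

section Counting

variable [Fintype α] [Fintype β] [Fintype ι] [Fintype κ]

lemma card_filter_comp_eq_mul_le {γ : Type*} [Fintype γ] [DecidableEq γ] (e : ι ↪ γ)
    (P : ι → Bool) :
    #{M : γ → Bool | ∀ i, M (e i) = P i} * 2 ^ card ι ≤ 2 ^ card γ := by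
  classical
  calc _ = #(({M : γ → Bool | ∀ i, M (e i) = P i} : Finset _) ×ˢ
          (univ : Finset (ι → Bool))) := by simp
    _ ≤ #(univ : Finset (γ → Bool)) := by
        refine card_le_card_of_injOn (fun Mq => Function.extend e Mq.2 Mq.1) (by simp) ?_
        rintro ⟨M, q⟩ hM ⟨M', q'⟩ hM' heq
        simp only [coe_product, coe_filter, coe_univ, Set.mem_prod, Set.mem_ofPred_eq, mem_univ,
          true_and, Set.mem_univ, and_true] at hM hM'
        have hq : q = q' := funext fun i => by
          simpa [e.injective.extend_apply] using congrFun heq (e i)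
        subst hq
        refine Prod.ext (funext fun x => ?_) rfl
        by_cases hx : ∃ i, e i = x
        · obtain ⟨i, rfl⟩ := hx
          exact (hM i).trans (hM' i).symm
        · simpa [Function.extend_apply' _ _ _ hx] using congrFun heq x
    _ = _ := by simp

open scoped Classical in
lemma card_filter_hasSubmatrix_mul_le (P : ι × κ → Bool) :
    #{M : α × β → Bool | HasSubmatrix M P} * 2 ^ (card ι * card κ) ≤
      (card α).descFactorial (card ι) * (card β).descFactorial (card κ) *
        2 ^ (card α * card β) := by
  have hsub : ({M : α × β → Bool | HasSubmatrix M P} : Finset _) ⊆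
      univ.biUnion fun fg : (ι ↪ α) × (κ ↪ β) =>
        {M : α × β → Bool | ∀ p, M (fg.1.prodMap fg.2 p) = P p} := by
    intro M hM
    obtain ⟨f, g, hfg⟩ := (mem_filter.1 hM).2
    exact mem_biUnion.2 ⟨(f, g), mem_univ _, mem_filter.2 ⟨mem_univ _, hfg⟩⟩
  calc _ ≤ (∑ fg : (ι ↪ α) × (κ ↪ β),
          #{M : α × β → Bool | ∀ p, M (fg.1.prodMap fg.2 p) = P p}) *
          2 ^ (card ι * card κ) :=
        Nat.mul_le_mul_right _ ((card_le_card hsub).trans card_biUnion_le)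
    _ ≤ ∑ _fg : (ι ↪ α) × (κ ↪ β), 2 ^ (card α * card β) := by
        rw [sum_mul]
        refine sum_le_sum fun fg _ => ?_
        simpa [Fintype.card_prod] using card_filter_comp_eq_mul_le (fg.1.prodMap fg.2) P
    _ = _ := by simp [Fintype.card_prod]

lemma exists_forall_not_hasSubmatrix (Ps : Finset (ι × κ → Bool))
    (h : #Ps * (card α).descFactorial (card ι) * (card β).descFactorial (card κ) <
      2 ^ (card ι * card κ)) :
    ∃ M : α × β → Bool, ∀ P ∈ Ps, ¬ HasSubmatrix M P := by
  classical
  by_contra! hall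
  have hcover : (univ : Finset (α × β → Bool)) ⊆
      Ps.biUnion fun P => {M : α × β → Bool | HasSubmatrix M P} := fun M _ => by
    obtain ⟨P, hP, hMP⟩ := hall M
    exact mem_biUnion.2 ⟨P, hP, mem_filter.2 ⟨mem_univ _, hMP⟩⟩
  have := calc 2 ^ (card α * card β) * 2 ^ (card ι * card κ)
      = #(univ : Finset (α × β → Bool)) * 2 ^ (card ι * card κ) := by simp
    _ ≤ (∑ P ∈ Ps, #{M : α × β → Bool | HasSubmatrix M P}) * 2 ^ (card ι * card κ) :=
        Nat.mul_le_mul_right _ ((card_le_card hcover).trans card_biUnion_le)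
    _ ≤ ∑ _P ∈ Ps, (card α).descFactorial (card ι) * (card β).descFactorial (card κ) *
          2 ^ (card α * card β) := by
        rw [sum_mul]
        exact sum_le_sum fun P _ => card_filter_hasSubmatrix_mul_le P
    _ = #Ps * (card α).descFactorial (card ι) *
          (card β).descFactorial (card κ) * 2 ^ (card α * card β) := by
        simp [mul_assoc]
    _ < 2 ^ (card ι * card κ) * 2 ^ (card α * card β) :=
        Nat.mul_lt_mul_of_pos_right h (by positivity)
  exact lt_irrefl _ (this.trans_eq (mul_comm _ _))

end Counting

lemma IsInducedMatching.ne_and_not_adj {V : Type*} {G : SimpleGraph V} {M : Finset (V × V)}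
    (hM : IsInducedMatching G M) {e f : V × V} (he : e ∈ M) (hf : f ∈ M) (hef : e ≠ f)
    {u v : V} (hu : u = e.1 ∨ u = e.2) (hv : v = f.1 ∨ v = f.2) : u ≠ v ∧ ¬ G.Adj u v := by
  have hdisj := hM.1.2 e he f hf hef
  have hind := hM.2 e he f hf hef
  rcases hu with rfl | rfl <;> rcases hv with rfl | rfl <;> tauto

def SimpleGraph.ofBiadj (M : α × β → Bool) : SimpleGraph (α ⊕ β) where
  Adj
    | .inl a, .inr b => M (a, b) = true
    | .inr b, .inl a => M (a, b) = true
    | _, _ => False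
  symm.symm
    | .inl _, .inr _ | .inr _, .inl _ | .inl _, .inl _ | .inr _, .inr _ => id
  loopless.irrefl
    | .inl _ | .inr _ => id

namespace SimpleGraph

variable {M : α × β → Bool} {t : ℕ}

@[simp] lemma ofBiadj_adj_inl_inr (a : α) (b : β) :
    (ofBiadj M).Adj (.inl a) (.inr b) ↔ M (a, b) = true := Iff.rfl

lemma not_ofBiadj_adj_inl_inl (a a' : α) : ¬ (ofBiadj M).Adj (.inl a) (.inl a') := id

lemma not_ofBiadj_adj_inr_inr (b b' : β) : ¬ (ofBiadj M).Adj (.inr b) (.inr b') := id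

lemma exists_of_ofBiadj_adj {u v : α ⊕ β} (h : (ofBiadj M).Adj u v) :
    ∃ a b, M (a, b) = true ∧ (.inl a = u ∨ .inl a = v) ∧ (.inr b = u ∨ .inr b = v) := by
  rcases u with a | b <;> rcases v with a' | b'
  · exact (not_ofBiadj_adj_inl_inl a a' h).elim
  · exact ⟨a, b', h, .inl rfl, .inr rfl⟩
  · exact ⟨a', b, h, .inr rfl, .inl rfl⟩
  · exact (not_ofBiadj_adj_inr_inr b b' h).elim

lemma hasSubmatrix_true_of_hasKttSubgraph (hG : HasKttSubgraph (ofBiadj M) t) (ht : 0 < t) :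
    HasSubmatrix M fun _ : Fin t × Fin t => true := by
  obtain ⟨A, B, -, hA, hB, hAB⟩ := hG
  have left_empty : A.toLeft = ∅ ∨ B.toLeft = ∅ := by
    by_contra! h
    obtain ⟨⟨a, ha⟩, ⟨b, hb⟩⟩ := h
    exact hAB _ (mem_toLeft.1 ha) _ (mem_toLeft.1 hb)
  have right_empty : A.toRight = ∅ ∨ B.toRight = ∅ := by
    by_contra! h
    obtain ⟨⟨a, ha⟩, ⟨b, hb⟩⟩ := h
    exact hAB _ (mem_toRight.1 ha) _ (mem_toRight.1 hb)
  have hA' := A.card_toLeft_add_card_toRight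
  have hB' := B.card_toLeft_add_card_toRight
  rcases left_empty with hl | hl <;> rcases right_empty with hr | hr <;>
    simp only [hl, hr, Finset.card_empty, add_zero, zero_add] at hA' hB' <;> try omega
  · exact hasSubmatrix_const_of_forall_mem (hB'.trans hB) (hA'.trans hA) fun a ha b hb =>
      (hAB _ (mem_toRight.1 hb) _ (mem_toLeft.1 ha)).symm
  · exact hasSubmatrix_const_of_forall_mem (hA'.trans hA) (hB'.trans hB) fun a ha b hb =>
      hAB _ (mem_toLeft.1 ha) _ (mem_toRight.1 hb)

lemma hasSubmatrix_diag_of_isInducedMatching {E : Finset ((α ⊕ β) × (α ⊕ β))}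
    (hE : IsInducedMatching (ofBiadj M) E) (hcard : #E = t) :
    HasSubmatrix M fun p : Fin t × Fin t => decide (p.1 = p.2) := by
  let e : Fin t ≃ E := (E.equivFinOfCardEq hcard).symm
  choose a b hab ha hb using fun i => exists_of_ofBiadj_adj (hE.1.1 _ (e i).2)
  have apart : ∀ {i j}, i ≠ j → ∀ {u v}, (u = (e i).1.1 ∨ u = (e i).1.2) →
      (v = (e j).1.1 ∨ v = (e j).1.2) → u ≠ v ∧ ¬ (ofBiadj M).Adj u v := fun hij =>
    hE.ne_and_not_adj (e _).2 (e _).2 (Subtype.val_injective.ne (e.injective.ne hij))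
  refine ⟨⟨a, fun i j hij => ?_⟩, ⟨b, fun i j hij => ?_⟩, fun ⟨i, j⟩ => ?_⟩
  · by_contra hne
    exact (apart hne (ha i) (ha j)).1 (congrArg Sum.inl hij)
  · by_contra hne
    exact (apart hne (hb i) (hb j)).1 (congrArg Sum.inr hij)
  show M (a i, b j) = decide (i = j)
  by_cases hij : i = j
  · subst hij
    simpa using hab i
  · simpa [hij] using (apart hij (ha i) (hb j)).2

end SimpleGraph

lemma floor_rpow_div_pow_le (b t k : ℕ) (hk : k ≠ 0) :
    ⌊(b : ℝ) ^ ((t : ℝ) / k)⌋₊ ^ k ≤ b ^ t := by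
  have hpos : (0 : ℝ) ≤ (b : ℝ) ^ ((t : ℝ) / k) := by positivity
  have hroot : ((b : ℝ) ^ ((t : ℝ) / k)) ^ k = (b : ℝ) ^ t := by
    rw [← Real.rpow_natCast, ← Real.rpow_mul b.cast_nonneg,
      div_mul_cancel₀ _ (by exact_mod_cast hk), Real.rpow_natCast]
  exact_mod_cast (pow_le_pow_left₀ (Nat.cast_nonneg _) (Nat.floor_le hpos) k).trans hroot.le

lemma three_mul_pow_mul_pow_lt {n t : ℕ} (ht : 3 ≤ t) (hn : n ^ 3 ≤ 2 ^ t) :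
    3 * n ^ t * n ^ t < 2 ^ (t * t) := by
  have h27 : 27 < 2 ^ (t * t) :=
    calc 27 < 2 ^ 9 := by norm_num
      _ ≤ 2 ^ (t * t) := Nat.pow_le_pow_right two_pos (by nlinarith)
  refine lt_of_pow_lt_pow_left₀ 3 (Nat.zero_le _) ?_
  calc (3 * n ^ t * n ^ t) ^ 3 = 27 * (n ^ 3) ^ (2 * t) := by ring
    _ ≤ 27 * (2 ^ t) ^ (2 * t) := by gcongr
    _ < 2 ^ (t * t) * (2 ^ t) ^ (2 * t) := by gcongr
    _ = (2 ^ (t * t)) ^ 3 := by ring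

/-- there exists `t₀` such that for every `t ≥ t₀`, with `n = ⌊2^{t/3}⌋`,
there is a bipartite graph with parts of size `n` containing no `K_{t,t}` subgraph, having
an edge between any two `t`-subsets of opposite parts, and having no induced matching of
size `t`. -/
theorem stmt13 : ∃ t₀ : ℕ, ∀ t : ℕ, t₀ ≤ t →
    ∀ n : ℕ, n = ⌊(2 : ℝ) ^ ((t : ℝ) / 3)⌋₊ →
      ∃ G : SimpleGraph (Fin n ⊕ Fin n),
        (∀ a b : Fin n, ¬ G.Adj (Sum.inl a) (Sum.inl b)) ∧
        (∀ a b : Fin n, ¬ G.Adj (Sum.inr a) (Sum.inr b)) ∧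
        ¬ HasKttSubgraph G t ∧
        (∀ X Y : Finset (Fin n), X.card = t → Y.card = t →
          ∃ a ∈ X, ∃ b ∈ Y, G.Adj (Sum.inl a) (Sum.inr b)) ∧
        ¬ ∃ M : Finset ((Fin n ⊕ Fin n) × (Fin n ⊕ Fin n)),
            IsInducedMatching G M ∧ M.card = t := by
  refine ⟨3, fun t ht n hn => ?_⟩
  have hn3 : n ^ 3 ≤ 2 ^ t := hn ▸ by exact_mod_cast floor_rpow_div_pow_le 2 t 3 three_ne_zero
  obtain ⟨M, hM⟩ := exists_forall_not_hasSubmatrix (α := Fin n) (β := Fin n)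
    {fun _ => true, fun _ => false, fun p : Fin t × Fin t => decide (p.1 = p.2)} <| by
      simp only [Fintype.card_fin]
      calc _ ≤ 3 * n ^ t * n ^ t := by
            gcongr
            exacts [card_le_three, n.descFactorial_le_pow t, n.descFactorial_le_pow t]
        _ < _ := three_mul_pow_mul_pow_lt ht hn3
  refine ⟨SimpleGraph.ofBiadj M, SimpleGraph.not_ofBiadj_adj_inl_inl,
    SimpleGraph.not_ofBiadj_adj_inr_inr,
    fun h => hM _ (by simp) (SimpleGraph.hasSubmatrix_true_of_hasKttSubgraph h (by omega)),
    fun X Y hX hY => ?_,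
    fun ⟨E, hE, hcard⟩ =>
      hM _ (by simp) (SimpleGraph.hasSubmatrix_diag_of_isInducedMatching hE hcard)⟩
  by_contra! h
  exact hM (fun _ => false) (by simp) <|
    hasSubmatrix_const_of_forall_mem hX hY fun a ha b hb => by simpa using h a ha b hb
end

section
/- Let t and n be positive integers and let G be a bipartite graph with parts A and B of size n each such that for all subsets X ⊆ A and Y ⊆ B with |X| = |Y| = t there is at least one edge of G between X and Y. Then for every set S ⊆ V(G) with |S| < n − 2t, there is no partition of V(G) \ S into two disjoint sets W and Z, each of size at least 2t, with no edge of G between W and Z. -/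
/-! Split `W` and `Z` into their parts in `A` and in `B`. As there are no `W`–`Z` edges, density
forbids `|W ∩ A| ≥ t` together with `|Z ∩ B| ≥ t`, and `|Z ∩ A| ≥ t` together with `|W ∩ B| ≥ t`.
In each of the four remaining cases either `W` or `Z` has fewer than `2t` vertices, or one part
of size `n` is covered by `W`, `Z` and `S` with fewer than `2t + |S| < n` vertices. -/

open Set

namespace Set

variable {α β : Type*}

theorem ncard_preimage_le_of_injective [Finite β] {f : α → β} (hf : f.Injective) (s : Set β) :
    (f ⁻¹' s).ncard ≤ s.ncard :=
  ncard_le_ncard_of_injOn f (fun _ h ↦ h) hf.injOn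

theorem card_le_ncard_preimage_add_ncard_preimage_add_ncard_preimage [Finite α] (f : α → β)
    {s t u : Set β} (h : s ∪ t ∪ u = univ) :
    Nat.card α ≤ (f ⁻¹' s).ncard + (f ⁻¹' t).ncard + (f ⁻¹' u).ncard := by
  rw [← ncard_univ, ← preimage_univ, ← h, preimage_union, preimage_union]
  exact (ncard_union_le _ _).trans (Nat.add_le_add_right (ncard_union_le _ _) _)

theorem ncard_eq_ncard_preimage_inl_add_ncard_preimage_inr [Finite α] [Finite β]
    (s : Set (α ⊕ β)) : s.ncard = (Sum.inl ⁻¹' s).ncard + (Sum.inr ⁻¹' s).ncard := by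
  conv_lhs => rw [← image_preimage_inl_union_image_preimage_inr s]
  rw [ncard_union_eq disjoint_image_inl_image_inr, ncard_image_of_injective _ Sum.inl_injective,
    ncard_image_of_injective _ Sum.inr_injective]

theorem exists_finset_subset_card_eq [Finite α] {s : Set α} {n : ℕ} (hn : n ≤ s.ncard) :
    ∃ X : Finset α, ↑X ⊆ s ∧ X.card = n := by
  obtain ⟨X, hXs, hX⟩ := Finset.exists_subset_card_eq (ncard_eq_toFinset_card s ▸ hn)
  exact ⟨X, fun x hx ↦ by simpa using hXs hx, hX⟩

end Set

theorem SimpleGraph.ncard_preimage_inl_lt_or_ncard_preimage_inr_lt {α β : Type*} [Finite α]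
    [Finite β] {G : SimpleGraph (α ⊕ β)} {t : ℕ}
    (hdense : ∀ (X : Finset α) (Y : Finset β), X.card = t → Y.card = t →
      ∃ a ∈ X, ∃ b ∈ Y, G.Adj (Sum.inl a) (Sum.inr b))
    {P Q : Set (α ⊕ β)} (hPQ : ∀ p ∈ P, ∀ q ∈ Q, ¬ G.Adj p q) :
    (Sum.inl ⁻¹' P).ncard < t ∨ (Sum.inr ⁻¹' Q).ncard < t := by
  by_contra! ⟨hP, hQ⟩
  obtain ⟨X, hXP, hX⟩ := exists_finset_subset_card_eq hP
  obtain ⟨Y, hYQ, hY⟩ := exists_finset_subset_card_eq hQ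
  obtain ⟨a, ha, b, hb, hab⟩ := hdense X Y hX hY
  exact hPQ _ (hXP ha) _ (hYQ hb) hab

theorem stmt14_general (t n : ℕ)
    (G : SimpleGraph (Fin n ⊕ Fin n))
    (hdense : ∀ X Y : Finset (Fin n), X.card = t → Y.card = t →
      ∃ a ∈ X, ∃ b ∈ Y, G.Adj (Sum.inl a) (Sum.inr b))
    (S : Set (Fin n ⊕ Fin n)) (hS : (S.ncard : ℤ) < (n : ℤ) - 2 * (t : ℤ)) :
    ¬ ∃ W Z : Set (Fin n ⊕ Fin n),
        W ∪ Z = Set.univ \ S ∧ Disjoint W Z ∧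
        2 * t ≤ W.ncard ∧ 2 * t ≤ Z.ncard ∧
        ∀ w ∈ W, ∀ z ∈ Z, ¬ G.Adj w z := by
  rintro ⟨W, Z, hWZ, -, hW, hZ, hWZ_nonadj⟩
  have hWZ_small := G.ncard_preimage_inl_lt_or_ncard_preimage_inr_lt hdense hWZ_nonadj
  have hZW_small := G.ncard_preimage_inl_lt_or_ncard_preimage_inr_lt hdense
    fun z hz w hw h ↦ hWZ_nonadj w hw z hz h.symm
  have hcover : W ∪ Z ∪ S = univ := by simp [hWZ]
  have hA := card_le_ncard_preimage_add_ncard_preimage_add_ncard_preimage Sum.inl hcover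
  have hB := card_le_ncard_preimage_add_ncard_preimage_add_ncard_preimage Sum.inr hcover
  have hSA := ncard_preimage_le_of_injective Sum.inl_injective S
  have hSB := ncard_preimage_le_of_injective Sum.inr_injective S
  rw [Nat.card_fin] at hA hB
  rw [ncard_eq_ncard_preimage_inl_add_ncard_preimage_inr] at hW hZ
  omega

/-- if `G` is bipartite with parts of size `n` and there is an edge between
any two `t`-subsets of opposite parts, then after removing any set `S` of fewer than
`n - 2t` vertices, the rest cannot be partitioned into two sets `W`, `Z` of size at least
`2t` each with no edge between them. -/
theorem stmt14 (t n : ℕ) (ht : 0 < t) (hn : 0 < n)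
    (G : SimpleGraph (Fin n ⊕ Fin n))
    (hbipA : ∀ a b : Fin n, ¬ G.Adj (Sum.inl a) (Sum.inl b))
    (hbipB : ∀ a b : Fin n, ¬ G.Adj (Sum.inr a) (Sum.inr b))
    (hdense : ∀ X Y : Finset (Fin n), X.card = t → Y.card = t →
      ∃ a ∈ X, ∃ b ∈ Y, G.Adj (Sum.inl a) (Sum.inr b))
    (S : Set (Fin n ⊕ Fin n)) (hS : (S.ncard : ℤ) < (n : ℤ) - 2 * (t : ℤ)) :
    ¬ ∃ W Z : Set (Fin n ⊕ Fin n),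
        W ∪ Z = Set.univ \ S ∧ Disjoint W Z ∧
        2 * t ≤ W.ncard ∧ 2 * t ≤ Z.ncard ∧
        ∀ w ∈ W, ∀ z ∈ Z, ¬ G.Adj w z :=
  stmt14_general t n G hdense S hS
end

section
/- Let n ≥ 1 and let G be a graph on exactly 2n vertices that admits a perfect matching M of size n (so every vertex of G is an endpoint of an edge of M), and let m denote the number of edges of G. Then there is a subset M' ⊆ M of size at least n²/(3m) that is an induced matching in G. -/
/-!
Call two edges of `M` conflicting when some edge of `G` joins them. An independent set of this
conflict graph on `M` is an induced matching. Turán's theorem, applied to the complement, gives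
every graph with `N` vertices and `E` edges an independent set of size at least `N² / (N + 2E)`.
Here `N = n ≤ m`, and since `M` is a matching, choosing for each conflicting ordered pair
`(e, f)` a dart of `G` from `e` to `f` is injective, so `2E ≤ 2m`. Hence `N + 2E ≤ 3m`.
-/

open Finset Fintype

namespace SimpleGraph

variable {V : Type*} [Fintype V] {G : SimpleGraph V}

theorem CliqueFree.two_mul_mul_card_edgeFinset_le [DecidableRel G.Adj] {r : ℕ}
    (hG : G.CliqueFree (r + 1)) : 2 * r * #G.edgeFinset ≤ (r - 1) * card V ^ 2 := by
  rcases r.eq_zero_or_pos with rfl | hr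
  · simp
  obtain ⟨H, _, hH⟩ := exists_isTuranMaximal (V := V) hr
  obtain ⟨e⟩ := (isTuranMaximal_iff_nonempty_iso_turanGraph hr).mp hH
  calc 2 * r * #G.edgeFinset ≤ 2 * r * #H.edgeFinset := Nat.mul_le_mul_left _ (hH.2 hG)
    _ = 2 * r * #(turanGraph (card V) r).edgeFinset := by rw [e.card_edgeFinset_eq]
    _ ≤ (r - 1) * card V ^ 2 := mul_card_edgeFinset_turanGraph_le

theorem cliqueFree_compl_indepNum_add_one : Gᶜ.CliqueFree (G.indepNum + 1) := fun s hs => by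
  have hs' := (isNClique_compl (G := G)).mp hs
  have := hs'.isIndepSet.card_le_indepNum
  rw [hs'.card_eq] at this
  omega

theorem card_edgeFinset_compl_add_card_edgeFinset [DecidableEq V] [DecidableRel G.Adj] :
    #Gᶜ.edgeFinset + #G.edgeFinset = (card V).choose 2 := by
  rw [← card_union_of_disjoint (disjoint_edgeFinset.mpr disjoint_compl_left), ← edgeFinset_sup,
    ← card_edgeFinset_top_eq_card_choose_two]
  congr 1
  ext e
  induction e with | h x y => ?_
  by_cases hxy : G.Adj x y
  · simp [hxy, G.ne_of_adj hxy]
  · simp [hxy]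

theorem card_sq_le_indepNum_mul [DecidableRel G.Adj] :
    card V ^ 2 ≤ G.indepNum * (card V + 2 * #G.edgeFinset) := by
  classical
  have hturan := (cliqueFree_compl_indepNum_add_one (G := G)).two_mul_mul_card_edgeFinset_le
  have hcompl := G.card_edgeFinset_compl_add_card_edgeFinset
  have hchoose : 2 * (card V).choose 2 = card V * (card V - 1) := by
    rw [Nat.choose_two_right, Nat.mul_div_cancel' (Nat.even_mul_pred_self _).two_dvd]
  rcases Nat.eq_zero_or_pos (card V) with h0 | hV
  · simp [h0]
  have hα : 0 < G.indepNum := by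
    obtain ⟨v⟩ := card_pos_iff.mp hV
    exact IsIndepSet.card_le_indepNum (G := G) (t := {v}) (by simp)
  -- `Gᶜ` has `N(N-1)/2 - E` edges, so Turán's bound for it rearranges to `N² ≤ α (N + 2E)`.
  zify [hα, hV] at hturan hchoose ⊢
  nlinarith

end SimpleGraph

def conflictGraph {V : Type*} (G : SimpleGraph V) : SimpleGraph (V × V) where
  Adj e f := e ≠ f ∧ (G.Adj e.1 f.1 ∨ G.Adj e.1 f.2 ∨ G.Adj e.2 f.1 ∨ G.Adj e.2 f.2)
  symm := ⟨fun _ _ h => ⟨h.1.symm, by simp only [G.adj_comm] at h ⊢; tauto⟩⟩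
  loopless := ⟨fun _ h => h.1 rfl⟩

instance {V : Type*} [DecidableEq V] (G : SimpleGraph V) [DecidableRel G.Adj] :
    DecidableRel (conflictGraph G).Adj :=
  fun _ _ => inferInstanceAs (Decidable (_ ∧ _))

theorem exists_dart_of_conflictGraph_adj {V : Type*} {G : SimpleGraph V} {e f : V × V}
    (h : (conflictGraph G).Adj e f) :
    ∃ d : G.Dart, (d.fst = e.1 ∨ d.fst = e.2) ∧ (d.snd = f.1 ∨ d.snd = f.2) := by
  rcases h.2 with h | h | h | h
  exacts [⟨⟨(e.1, f.1), h⟩, by simp⟩, ⟨⟨(e.1, f.2), h⟩, by simp⟩, ⟨⟨(e.2, f.1), h⟩, by simp⟩,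
    ⟨⟨(e.2, f.2), h⟩, by simp⟩]

namespace IsMatching'

variable {V : Type*} {G : SimpleGraph V} {M : Finset (V × V)}

theorem mono (hM : IsMatching' G M) {M' : Finset (V × V)} (h : M' ⊆ M) : IsMatching' G M' :=
  ⟨fun e he => hM.1 e (h he), fun e he f hf => hM.2 e (h he) f (h hf)⟩

theorem eq_of_incident (hM : IsMatching' G M) {e f : V × V} (he : e ∈ M) (hf : f ∈ M) {u : V}
    (hue : u = e.1 ∨ u = e.2) (huf : u = f.1 ∨ u = f.2) : e = f := by
  by_contra hne
  have := hM.2 e he f hf hne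
  rcases hue with rfl | rfl <;> rcases huf with h | h <;> tauto

theorem card_le_card_edgeFinset (hM : IsMatching' G M) [Fintype G.edgeSet] :
    #M ≤ #G.edgeFinset :=
  card_le_card_of_injOn (fun e => s(e.1, e.2))
    (fun e he => G.mem_edgeFinset.mpr (hM.1 e he))
    (fun e he f hf hef => hM.eq_of_incident he hf (u := e.1) (by simp) <| by
      rcases Sym2.eq_iff.mp hef with ⟨h, -⟩ | ⟨h, -⟩ <;> simp [h])

theorem isInducedMatching_map_subtype (hM : IsMatching' G M) {s : Finset (M : Set (V × V))}
    (hs : ((conflictGraph G).induce M).IsIndepSet s) :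
    IsInducedMatching G (s.map (Function.Embedding.subtype _)) := by
  refine ⟨hM.mono (coe_subset.mp (map_subtype_subset s)), ?_⟩
  simp only [mem_map, Function.Embedding.coe_subtype]
  rintro _ ⟨e, he, rfl⟩ _ ⟨f, hf, rfl⟩ hef
  have := hs he hf (fun h => hef (congrArg Subtype.val h))
  simp only [SimpleGraph.comap_adj, Function.Embedding.subtype_apply, conflictGraph] at this
  tauto

theorem card_edgeFinset_induce_conflictGraph_le [Fintype V] [DecidableEq V] [DecidableRel G.Adj]
    (hM : IsMatching' G M) :
    #((conflictGraph G).induce (M : Set (V × V))).edgeFinset ≤ #G.edgeFinset := by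
  choose w hw using fun d : ((conflictGraph G).induce (M : Set (V × V))).Dart =>
    exists_dart_of_conflictGraph_adj d.adj
  have hw_inj : Function.Injective w := fun d d' h => by
    have hfst := hM.eq_of_incident d.fst.2 d'.fst.2 (hw d).1 (h ▸ (hw d').1)
    have hsnd := hM.eq_of_incident d.snd.2 d'.snd.2 (hw d).2 (h ▸ (hw d').2)
    exact SimpleGraph.Dart.ext _ _ (Prod.ext (Subtype.ext hfst) (Subtype.ext hsnd))
  have := Fintype.card_le_of_injective w hw_inj
  rw [SimpleGraph.dart_card_eq_twice_card_edges, SimpleGraph.dart_card_eq_twice_card_edges] at this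
  omega

end IsMatching'

theorem stmt16_general (n : ℕ) (V : Type) [Fintype V] (G : SimpleGraph V)
    (M : Finset (V × V)) (hM : IsMatching' G M) (hMcard : M.card = n) :
    ∃ M' : Finset (V × V), M' ⊆ M ∧ IsInducedMatching G M' ∧
      (n : ℝ) ^ 2 / (3 * (G.edgeSet.ncard : ℝ)) ≤ (M'.card : ℝ) := by
  classical
  obtain ⟨s, hs⟩ := ((conflictGraph G).induce (M : Set (V × V))).exists_isNIndepSet_indepNum
  refine ⟨s.map (.subtype _), coe_subset.mp (map_subtype_subset s),
    hM.isInducedMatching_map_subtype hs.isIndepSet, ?_⟩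
  have hturan := ((conflictGraph G).induce (M : Set (V × V))).card_sq_le_indepNum_mul
  have hconflicts := hM.card_edgeFinset_induce_conflictGraph_le
  have hedges := hM.card_le_card_edgeFinset
  have key : n ^ 2 ≤ #s * (3 * #G.edgeFinset) := by
    have hcardM : Fintype.card (M : Set (V × V)) = n := by simp [hMcard]
    rw [hcardM, ← hs.card_eq] at hturan
    rw [hMcard] at hedges
    calc n ^ 2 ≤ _ := hturan
      _ ≤ #s * (3 * #G.edgeFinset) := Nat.mul_le_mul_left _ (by omega)
  rw [card_map, Set.ncard_eq_toFinset_card' G.edgeSet, ← SimpleGraph.edgeFinset]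
  exact div_le_of_le_mul₀ (by positivity) (by positivity) (by exact_mod_cast key)

/-- if `G` has exactly `2n` vertices, a perfect matching `M` of size `n`,
and `m` edges, then some `M' ⊆ M` of size at least `n²/(3m)` is an induced matching. -/
theorem stmt16 (n : ℕ) (hn : 1 ≤ n) (V : Type) [Fintype V]
    (G : SimpleGraph V) (hcard : Fintype.card V = 2 * n)
    (M : Finset (V × V)) (hM : IsMatching' G M) (hMcard : M.card = n)
    (hperf : ∀ v : V, ∃ e ∈ M, v = e.1 ∨ v = e.2) :
    ∃ M' : Finset (V × V), M' ⊆ M ∧ IsInducedMatching G M' ∧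
      (n : ℝ) ^ 2 / (3 * (G.edgeSet.ncard : ℝ)) ≤ (M'.card : ℝ) :=
  stmt16_general n V G M hM hMcard
end
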